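/- arXiv:2512.09857 — 14 statements merged into one kernel-verified Lean document; each statement's English description precedes it below -/
import Mathlib

section
/- Let H be an infinite-dimensional real Hilbert space, Y a locally convex topological vector space over ℝ, and 𝒯 a set of linear maps from H to Y. Then the set ⋃_{T ∈ 𝒯} T(B_H) is von Neumann bounded in Y if and only if for every orthonormal sequence (x_n) in H the set {T x_n : T ∈ 𝒯, n ∈ ℕ} is von Neumann bounded in Y. -/
/-!
If the union of the images of the unit ball is unbounded, some continuous seminorm `p` is
unbounded on it: pick `Tₙ ∈ 𝒯` and `‖zₙ‖ ≤ 1` with `p (Tₙ zₙ) > (n + 1)²`. In infinite dimension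
a Gram–Schmidt-type recursion produces an orthonormal sequence `(eₖ)` with
`zₙ ∈ span {e₀, …, eₙ}`. Since the coefficients of `zₙ` in this basis have modulus at most `1`,
`p (Tₙ zₙ) ≤ (n + 1) · supₖ p (Tₙ eₖ)`, so `p` is unbounded on `{T eₖ}`.
-/

open Submodule Set

section Orthonormal

variable {𝕜 H : Type*} [RCLike 𝕜] [NormedAddCommGroup H] [InnerProductSpace 𝕜 H]

local notation "⟪" x ", " y "⟫" => @inner 𝕜 _ _ x y

theorem Submodule.exists_norm_eq_one_mem_orthogonal_mem_sup (K : Submodule 𝕜 H)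
    [K.HasOrthogonalProjection] (hK : K ≠ ⊤) (x : H) :
    ∃ w : H, ‖w‖ = 1 ∧ w ∈ Kᗮ ∧ x ∈ K ⊔ 𝕜 ∙ w := by
  obtain ⟨u, huK, hu0, hxu⟩ : ∃ u ∈ Kᗮ, u ≠ 0 ∧ x ∈ K ⊔ 𝕜 ∙ u := by
    by_cases hx : x ∈ K
    · obtain ⟨u, huK, hu0⟩ := (Submodule.ne_bot_iff _).mp (orthogonal_eq_bot_iff.not.mpr hK)
      exact ⟨u, huK, hu0, mem_sup_left hx⟩
    · refine ⟨x - K.starProjection x, K.sub_starProjection_mem_orthogonal x,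
        fun h ↦ hx ?_, ?_⟩
      · rw [sub_eq_zero.mp h]
        exact K.starProjection_apply_mem x
      · simpa using add_mem_sup (K.starProjection_apply_mem x)
          (mem_span_singleton_self (x - K.starProjection x))
  exact ⟨(‖u‖⁻¹ : 𝕜) • u, norm_smul_inv_norm hu0, Kᗮ.smul_mem _ huK, by
    rwa [span_singleton_smul_eq (by simpa using hu0)]⟩

theorem exists_norm_eq_one_inner_eq_zero_mem_span_insert (hH : ¬ FiniteDimensional 𝕜 H)
    {s : Set H} (hs : s.Finite) (x : H) :
    ∃ w : H, ‖w‖ = 1 ∧ (∀ u ∈ s, ⟪u, w⟫ = 0) ∧ x ∈ span 𝕜 (insert w s) := by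
  have : FiniteDimensional 𝕜 (span 𝕜 s) := FiniteDimensional.span_of_finite 𝕜 hs
  have hK : span 𝕜 s ≠ ⊤ := fun h ↦ hH <| .equiv (h ▸ topEquiv : span 𝕜 s ≃ₗ[𝕜] H)
  obtain ⟨w, hw1, hwK, hxw⟩ := (span 𝕜 s).exists_norm_eq_one_mem_orthogonal_mem_sup hK x
  refine ⟨w, hw1, fun u hu ↦ inner_right_of_mem_orthogonal (subset_span hu) hwK, ?_⟩
  rwa [span_insert, sup_comm]

variable (𝕜) in
noncomputable def spanningOrthonormalSeq (hH : ¬ FiniteDimensional 𝕜 H) (x : ℕ → H) (n : ℕ) : H :=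
  (exists_norm_eq_one_inner_eq_zero_mem_span_insert hH
    (finite_range fun i : Fin n ↦ spanningOrthonormalSeq hH x i) (x n)).choose
decreasing_by all_goals exact i.isLt

variable (hH : ¬ FiniteDimensional 𝕜 H) (x : ℕ → H)

local notation "e" => spanningOrthonormalSeq 𝕜 hH x

theorem spanningOrthonormalSeq_spec (n : ℕ) :
    ‖e n‖ = 1 ∧ (∀ u ∈ range fun i : Fin n ↦ e i, ⟪u, e n⟫ = 0) ∧
      x n ∈ span 𝕜 (insert (e n) (range fun i : Fin n ↦ e i)) := by
  rw [spanningOrthonormalSeq]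
  exact (exists_norm_eq_one_inner_eq_zero_mem_span_insert hH (finite_range _) (x n)).choose_spec

theorem orthonormal_spanningOrthonormalSeq : Orthonormal 𝕜 e := by
  refine ⟨fun n ↦ (spanningOrthonormalSeq_spec hH x n).1, fun i j hij ↦ ?_⟩
  have inner_eq_zero_of_lt {i j : ℕ} (h : i < j) : ⟪e i, e j⟫ = 0 :=
    (spanningOrthonormalSeq_spec hH x j).2.1 _ ⟨⟨i, h⟩, rfl⟩
  rcases hij.lt_or_gt with h | h
  · exact inner_eq_zero_of_lt h
  · exact inner_eq_zero_symm.mp (inner_eq_zero_of_lt h)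

theorem mem_span_spanningOrthonormalSeq (n : ℕ) :
    x n ∈ span 𝕜 (range fun i : Fin (n + 1) ↦ e i) := by
  refine span_mono ?_ (spanningOrthonormalSeq_spec hH x n).2.2
  refine insert_subset ⟨Fin.last n, rfl⟩ ?_
  rintro _ ⟨i, rfl⟩
  exact ⟨i.castSucc, rfl⟩

end Orthonormal

section Seminorm

variable {𝕜 H : Type*} [RCLike 𝕜] [NormedAddCommGroup H] [InnerProductSpace 𝕜 H]

theorem Orthonormal.seminorm_le_norm_mul_sum {ι : Type*} [Fintype ι] {v : ι → H}
    (hv : Orthonormal 𝕜 v) (q : Seminorm 𝕜 H) {z : H} (hz : z ∈ span 𝕜 (range v)) :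
    q z ≤ ‖z‖ * ∑ i, q (v i) := by
  obtain ⟨c, hc⟩ := (mem_span_range_iff_exists_fun 𝕜).mp hz
  have hc_le (i : ι) : ‖c i‖ ≤ ‖z‖ := by
    rw [← hv.inner_right_fintype c i, hc]
    exact (norm_inner_le_norm _ _).trans (by rw [hv.1 i, one_mul])
  calc q z = q (∑ i, c i • v i) := by rw [hc]
    _ ≤ ∑ i, q (c i • v i) :=
      Finset.le_sum_of_subadditive q (map_zero q).le (map_add_le_add q) _ _
    _ = ∑ i, ‖c i‖ * q (v i) := by simp only [map_smul_eq_mul]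
    _ ≤ ∑ i, ‖z‖ * q (v i) := by gcongr with i; exact hc_le i
    _ = ‖z‖ * ∑ i, q (v i) := (Finset.mul_sum ..).symm

theorem Seminorm.exists_bound_closedBall_of_bound_orthonormal (hH : ¬ FiniteDimensional 𝕜 H)
    {ι : Type*} (q : ι → Seminorm 𝕜 H)
    (hq : ∀ e : ℕ → H, Orthonormal 𝕜 e → ∃ R, ∀ i n, q i (e n) ≤ R) :
    ∃ R, ∀ i, ∀ z ∈ Metric.closedBall (0 : H) 1, q i z ≤ R := by
  by_contra! h
  choose i z hz hlt using fun n : ℕ ↦ h (((n : ℝ) + 1) ^ 2)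
  set e := spanningOrthonormalSeq 𝕜 hH z
  have he := orthonormal_spanningOrthonormalSeq hH z
  obtain ⟨R, hR⟩ := hq e he
  obtain ⟨n, hn⟩ := exists_nat_gt R
  have hle : q (i n) (z n) ≤ (n + 1) * R := calc
    q (i n) (z n) ≤ ‖z n‖ * ∑ k : Fin (n + 1), q (i n) (e k) :=
      (he.comp _ Fin.val_injective).seminorm_le_norm_mul_sum _
        (mem_span_spanningOrthonormalSeq hH z n)
    _ ≤ ∑ k : Fin (n + 1), q (i n) (e k) :=
      mul_le_of_le_one_left (by positivity) (mem_closedBall_zero_iff.mp (hz n))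
    _ ≤ ∑ _k : Fin (n + 1), R := Finset.sum_le_sum fun k _ ↦ hR (i n) k
    _ = (n + 1) * R := by simp
  nlinarith [hlt n]

end Seminorm

theorem set_of_operators_vonNBounded_iff_bounded_along_orthonormal_general
    {H : Type*} [NormedAddCommGroup H] [InnerProductSpace ℝ H]
    (hH : ¬ FiniteDimensional ℝ H)
    {Y : Type*} [AddCommGroup Y] [Module ℝ Y] [TopologicalSpace Y]
    [IsTopologicalAddGroup Y] [ContinuousSMul ℝ Y] [LocallyConvexSpace ℝ Y]
    (𝒯 : Set (H →ₗ[ℝ] Y)) :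
    Bornology.IsVonNBounded ℝ (⋃ T ∈ 𝒯, T '' Metric.closedBall (0 : H) 1) ↔
      ∀ x : ℕ → H, Orthonormal ℝ x →
        Bornology.IsVonNBounded ℝ {y : Y | ∃ T ∈ 𝒯, ∃ n : ℕ, y = T (x n)} := by
  refine ⟨fun hU x hx ↦ hU.subset ?_, fun h ↦ ?_⟩
  · rintro _ ⟨T, hT, n, rfl⟩
    exact mem_biUnion hT ⟨x n, mem_closedBall_zero_iff.mpr (hx.1 n).le, rfl⟩
  have hY := PolynormableSpace.withSeminorms ℝ Y
  refine hY.isVonNBounded_iff_seminorm_bddAbove.mpr fun p ↦ ?_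
  obtain ⟨R, hR⟩ := Seminorm.exists_bound_closedBall_of_bound_orthonormal hH
      (fun T : 𝒯 ↦ p.1.comp T.1) fun e he ↦ by
    obtain ⟨R, hR⟩ := hY.isVonNBounded_iff_seminorm_bddAbove.mp (h e he) p
    exact ⟨R, fun T n ↦ hR ⟨_, ⟨T, T.2, n, rfl⟩, rfl⟩⟩
  refine ⟨R, forall_mem_image.mpr fun y hy ↦ ?_⟩
  obtain ⟨T, hT, z, hz, rfl⟩ := mem_iUnion₂.mp hy
  exact hR ⟨T, hT⟩ z hz

/-- A set `𝒯` of linear maps from an infinite-dimensional real Hilbert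
space `H` to a locally convex TVS `Y` has `⋃_{T ∈ 𝒯} T(B_H)` von Neumann bounded
iff `{T xₙ : T ∈ 𝒯, n ∈ ℕ}` is von Neumann bounded for every orthonormal sequence. -/
theorem set_of_operators_vonNBounded_iff_bounded_along_orthonormal
    {H : Type*} [NormedAddCommGroup H] [InnerProductSpace ℝ H] [CompleteSpace H]
    (hH : ¬ FiniteDimensional ℝ H)
    {Y : Type*} [AddCommGroup Y] [Module ℝ Y] [TopologicalSpace Y]
    [IsTopologicalAddGroup Y] [ContinuousSMul ℝ Y] [LocallyConvexSpace ℝ Y]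
    (𝒯 : Set (H →ₗ[ℝ] Y)) :
    Bornology.IsVonNBounded ℝ (⋃ T ∈ 𝒯, T '' Metric.closedBall (0 : H) 1) ↔
      ∀ x : ℕ → H, Orthonormal ℝ x →
        Bornology.IsVonNBounded ℝ {y : Y | ∃ T ∈ 𝒯, ∃ n : ℕ, y = T (x n)} :=
  set_of_operators_vonNBounded_iff_bounded_along_orthonormal_general hH 𝒯
end

section
/- Let H be an infinite-dimensional real Hilbert space, Y a locally convex topological vector space over ℝ, and 𝒯 a set of linear maps from H to Y. Then the set ⋃_{T ∈ 𝒯} T(B_H) is von Neumann bounded in Y if and only if for every norm-bounded pairwise orthogonal sequence (x_n) in H the set {T x_n : T ∈ 𝒯, n ∈ ℕ} is von Neumann bounded in Y. -/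
/-!
Since `Y` is locally convex, boundedness can be tested one continuous seminorm `p` at a time.
If `p ∘ T` is unbounded on the unit ball but bounded along every orthogonal sequence, it is in
particular pointwise bounded, hence uniformly bounded on the unit ball of any finite-dimensional
subspace `K`. Projecting onto `Kᗮ` a unit vector `x` with `p (T x)` huge therefore keeps
`p (T x)` huge up to that bound, so one can choose inductively orthogonal unit vectors `xₙ` and
`Tₙ ∈ 𝒯` with `p (Tₙ xₙ) ≥ n`, a contradiction.
-/

open Set Metric

section

variable {H : Type*} [NormedAddCommGroup H] [InnerProductSpace ℝ H]

theorem Seminorm.exists_bound_on_finiteDimensional {ι : Type*} (q : ι → Seminorm ℝ H)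
    (hq : ∀ x, BddAbove (range fun i ↦ q i x)) (K : Submodule ℝ H) [FiniteDimensional ℝ K] :
    ∃ M, ∀ i, ∀ v ∈ K, ‖v‖ ≤ 1 → q i v ≤ M := by
  let b := stdOrthonormalBasis ℝ K
  choose M hM using fun j ↦ hq (b j : H)
  refine ⟨∑ j, max (M j) 0, fun i v hvK hv ↦ ?_⟩
  have hv_sum : v = ∑ j, inner ℝ (b j : H) v • (b j : H) := by
    simpa using congrArg K.subtype (b.sum_repr' ⟨v, hvK⟩).symm
  have hcoeff : ∀ j, |inner ℝ (b j : H) v| ≤ 1 := fun j ↦ by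
    have hbj : ‖(b j : H)‖ = 1 := b.orthonormal.1 j
    exact (abs_real_inner_le_norm _ _).trans (by rwa [hbj, one_mul])
  calc q i v = q i (∑ j, inner ℝ (b j : H) v • (b j : H)) := congrArg (q i) hv_sum
    _ ≤ ∑ j, q i (inner ℝ (b j : H) v • (b j : H)) :=
        Finset.le_sum_of_subadditive (q i) (map_zero _).le (map_add_le_add _) _ _
    _ ≤ ∑ j, max (M j) 0 := Finset.sum_le_sum fun j _ ↦ by
        rw [map_smul_eq_mul, Real.norm_eq_abs]
        exact (mul_le_mul (hcoeff j) ((hM j (mem_range_self i)).trans (le_max_left _ _))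
          (apply_nonneg _ _) zero_le_one).trans_eq (one_mul _)

variable {Y : Type*} [AddCommGroup Y] [Module ℝ Y] (p : Seminorm ℝ Y) {𝒯 : Set (H →ₗ[ℝ] Y)}

theorem exists_mem_orthogonal_lt_seminorm (hpt : ∀ y, BddAbove ((fun T ↦ p (T y)) '' 𝒯))
    (hunb : ¬BddAbove (p '' ⋃ T ∈ 𝒯, T '' closedBall (0 : H) 1))
    (K : Submodule ℝ H) [FiniteDimensional ℝ K] (r : ℝ) :
    ∃ T ∈ 𝒯, ∃ y ∈ Kᗮ, ‖y‖ ≤ 1 ∧ r < p (T y) := by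
  obtain ⟨M, hM⟩ := Seminorm.exists_bound_on_finiteDimensional
    (fun T : 𝒯 ↦ p.comp (T : H →ₗ[ℝ] Y)) (fun y ↦ by simpa [image_eq_range] using hpt y) K
  obtain ⟨_, hmem, hlt⟩ := not_bddAbove_iff.1 hunb (r + M)
  obtain ⟨_, hTx, rfl⟩ := hmem
  simp only [mem_iUnion, mem_image, mem_closedBall, dist_zero_right] at hTx
  obtain ⟨T, hT, x, hx, rfl⟩ := hTx
  refine ⟨T, hT, Kᗮ.starProjection x, Kᗮ.starProjection_apply_mem x,
    (Kᗮ.norm_starProjection_apply_le x).trans hx, ?_⟩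
  have hPx : p (T (K.starProjection x)) ≤ M :=
    hM ⟨T, hT⟩ _ (K.starProjection_apply_mem x) ((K.norm_starProjection_apply_le x).trans hx)
  have hsplit : T x = T (Kᗮ.starProjection x) + T (K.starProjection x) := by
    rw [← map_add, K.starProjection_orthogonal_val, sub_add_cancel]
  have hlt' : r + M < p (T (Kᗮ.starProjection x)) + M := calc
    r + M < p (T x) := hlt
    _ ≤ p (T (Kᗮ.starProjection x)) + p (T (K.starProjection x)) := hsplit ▸ map_add_le_add _ _ _
    _ ≤ p (T (Kᗮ.starProjection x)) + M := by gcongr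
  linarith

theorem exists_orthogonal_seq_le_seminorm (hpt : ∀ y, BddAbove ((fun T ↦ p (T y)) '' 𝒯))
    (hunb : ¬BddAbove (p '' ⋃ T ∈ 𝒯, T '' closedBall (0 : H) 1)) :
    ∃ (x : ℕ → H) (T : ℕ → H →ₗ[ℝ] Y), (∀ n, T n ∈ 𝒯) ∧ (∀ n, ‖x n‖ ≤ 1) ∧
      (∀ n m, n ≠ m → inner ℝ (x n) (x m) = (0 : ℝ)) ∧ ∀ n : ℕ, (n : ℝ) ≤ p (T n (x n)) := by
  classical
  obtain ⟨f, hf𝒯, hfrel⟩ := exists_seq_of_forall_finset_exists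
    (fun a : H × (H →ₗ[ℝ] Y) ↦ a.2 ∈ 𝒯 ∧ ‖a.1‖ ≤ 1)
    (fun a b ↦ inner ℝ a.1 b.1 = (0 : ℝ) ∧ p (a.2 a.1) + 1 ≤ p (b.2 b.1)) fun s _ ↦ by
      obtain ⟨r, hr⟩ := (s.image fun a ↦ p (a.2 a.1)).exists_le
      obtain ⟨T, hT, y, hyK, hy, hlt⟩ := exists_mem_orthogonal_lt_seminorm p hpt hunb
        (Submodule.span ℝ (s.image Prod.fst : Set H)) (r + 1)
      refine ⟨(y, T), ⟨hT, hy⟩, fun a ha ↦ ⟨?_, ?_⟩⟩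
      · exact (Submodule.mem_orthogonal _ y).1 hyK a.1
          (Submodule.subset_span (Finset.mem_image_of_mem _ ha))
      · linarith [hr _ (Finset.mem_image_of_mem _ ha)]
  refine ⟨fun n ↦ (f n).1, fun n ↦ (f n).2, fun n ↦ (hf𝒯 n).1, fun n ↦ (hf𝒯 n).2, ?_, ?_⟩
  · intro n m hnm
    rcases hnm.lt_or_gt with h | h
    · exact (hfrel n m h).1
    · rw [real_inner_comm]; exact (hfrel m n h).1
  · intro n
    induction n with
    | zero => exact_mod_cast apply_nonneg p _
    | succ n ih => push_cast; linarith [(hfrel n (n + 1) n.lt_succ_self).2]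

theorem bddAbove_seminorm_image_closedBall (h : BddAbove (p '' ⋃ T ∈ 𝒯, T '' closedBall (0 : H) 1))
    (C : ℝ) : BddAbove (p '' ⋃ T ∈ 𝒯, T '' closedBall (0 : H) C) := by
  obtain ⟨M, hM⟩ := h
  set c := max C 1
  have hc : 0 < c := lt_max_of_lt_right one_pos
  refine ⟨c * M, ?_⟩
  rintro _ ⟨_, hTx, rfl⟩
  simp only [mem_iUnion, mem_image, mem_closedBall, dist_zero_right] at hTx
  obtain ⟨T, hT, x, hx, rfl⟩ := hTx
  have hx' : c⁻¹ • x ∈ closedBall (0 : H) 1 := by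
    rw [mem_closedBall, dist_zero_right, norm_smul, norm_inv, Real.norm_of_nonneg hc.le,
      inv_mul_le_one₀ hc]
    exact hx.trans (le_max_left _ _)
  calc p (T x) = c * p (T (c⁻¹ • x)) := by
        rw [map_smul, map_smul_eq_mul, norm_inv, Real.norm_of_nonneg hc.le,
          mul_inv_cancel_left₀ hc.ne']
    _ ≤ c * M := by gcongr; exact hM ⟨_, mem_biUnion hT (mem_image_of_mem T hx'), rfl⟩

theorem bddAbove_seminorm_iff_along_orthogonal :
    BddAbove (p '' ⋃ T ∈ 𝒯, T '' closedBall (0 : H) 1) ↔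
      ∀ x : ℕ → H, (∀ n m, n ≠ m → inner ℝ (x n) (x m) = (0 : ℝ)) → (∃ C : ℝ, ∀ n, ‖x n‖ ≤ C) →
        BddAbove (p '' {y : Y | ∃ T ∈ 𝒯, ∃ n : ℕ, y = T (x n)}) := by
  constructor
  · rintro h x - ⟨C, hC⟩
    refine (bddAbove_seminorm_image_closedBall p h C).mono (image_mono ?_)
    rintro _ ⟨T, hT, n, rfl⟩
    exact mem_biUnion hT ⟨x n, by simpa using hC n, rfl⟩
  · intro h
    by_contra hunb
    have hpt (y : H) : BddAbove ((fun T ↦ p (T y)) '' 𝒯) := by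
      have horth (n m : ℕ) (hnm : n ≠ m) :
          inner ℝ ((Pi.single 0 y : ℕ → H) n) ((Pi.single 0 y : ℕ → H) m) = (0 : ℝ) := by
        by_cases hn : n = 0 <;> simp_all [Pi.single_apply]
      have hle (n : ℕ) : ‖(Pi.single 0 y : ℕ → H) n‖ ≤ ‖y‖ := by
        by_cases hn : n = 0 <;> simp [hn]
      refine (h _ horth ⟨‖y‖, hle⟩).mono ?_
      rintro _ ⟨T, hT, rfl⟩
      exact ⟨T y, ⟨T, hT, 0, by simp⟩, rfl⟩
    obtain ⟨x, T, hT, hx, horth, hgrow⟩ := exists_orthogonal_seq_le_seminorm p hpt hunb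
    obtain ⟨M, hM⟩ := h x horth ⟨1, hx⟩
    obtain ⟨n, hn⟩ := exists_nat_gt M
    exact (hn.trans_le (hgrow n)).not_ge (hM ⟨_, ⟨T n, hT n, n, rfl⟩, rfl⟩)

end

theorem set_of_operators_vonNBounded_iff_bounded_along_orthogonal_general
    {H : Type*} [NormedAddCommGroup H] [InnerProductSpace ℝ H]
    {Y : Type*} [AddCommGroup Y] [Module ℝ Y] [TopologicalSpace Y]
    [IsTopologicalAddGroup Y] [ContinuousSMul ℝ Y] [LocallyConvexSpace ℝ Y]
    (𝒯 : Set (H →ₗ[ℝ] Y)) :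
    Bornology.IsVonNBounded ℝ (⋃ T ∈ 𝒯, T '' Metric.closedBall (0 : H) 1) ↔
      ∀ x : ℕ → H, (∀ n m, n ≠ m → inner ℝ (x n) (x m) = (0 : ℝ)) →
        (∃ C : ℝ, ∀ n, ‖x n‖ ≤ C) →
        Bornology.IsVonNBounded ℝ {y : Y | ∃ T ∈ 𝒯, ∃ n : ℕ, y = T (x n)} := by
  simp only [(PolynormableSpace.withSeminorms ℝ Y).isVonNBounded_iff_seminorm_bddAbove,
    bddAbove_seminorm_iff_along_orthogonal]
  exact ⟨fun h x hx hC q ↦ h q x hx hC, fun h q x hx hC ↦ h x hx hC q⟩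

/-- `⋃_{T ∈ 𝒯} T(B_H)` is von Neumann bounded iff `{T xₙ}` is von Neumann
bounded for every norm-bounded pairwise orthogonal sequence `(xₙ)` in `H`. -/
theorem set_of_operators_vonNBounded_iff_bounded_along_orthogonal
    {H : Type*} [NormedAddCommGroup H] [InnerProductSpace ℝ H] [CompleteSpace H]
    (hH : ¬ FiniteDimensional ℝ H)
    {Y : Type*} [AddCommGroup Y] [Module ℝ Y] [TopologicalSpace Y]
    [IsTopologicalAddGroup Y] [ContinuousSMul ℝ Y] [LocallyConvexSpace ℝ Y]
    (𝒯 : Set (H →ₗ[ℝ] Y)) :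
    Bornology.IsVonNBounded ℝ (⋃ T ∈ 𝒯, T '' Metric.closedBall (0 : H) 1) ↔
      ∀ x : ℕ → H, (∀ n m, n ≠ m → inner ℝ (x n) (x m) = (0 : ℝ)) →
        (∃ C : ℝ, ∀ n, ‖x n‖ ≤ C) →
        Bornology.IsVonNBounded ℝ {y : Y | ∃ T ∈ 𝒯, ∃ n : ℕ, y = T (x n)} :=
  set_of_operators_vonNBounded_iff_bounded_along_orthogonal_general 𝒯
end

section
/- Let H be an infinite-dimensional real Hilbert space, Y a locally convex topological vector space over ℝ, and T : H → Y a linear map. Then T(B_H) is von Neumann bounded in Y if and only if for every orthonormal sequence (x_n) in H the set {T x_n : n ∈ ℕ} is von Neumann bounded in Y. -/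
/-!
The topology of `Y` is given by continuous seminorms, so `T(B_H)` fails to be bounded exactly
when some seminorm `q = p ∘ T` is unbounded on `B_H`. Such a `q` stays unbounded on the unit
vectors orthogonal to any finite-dimensional subspace `K`: on the unit ball of `K` it is bounded
(seminorms on finite-dimensional spaces are continuous), and `q z ≤ q (P_K z) + q (z - P_K z)`.
Choosing these unit vectors one after another gives an orthonormal sequence with `q (xₙ) ≥ n`.
-/

open Set Metric

namespace Seminorm

theorem continuous_of_finiteDimensional {E : Type*} [NormedAddCommGroup E]
    [NormedSpace ℝ E] [FiniteDimensional ℝ E] (q : Seminorm ℝ E) : Continuous q :=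
  continuousOn_univ.1 (q.convexOn.continuousOn isOpen_univ)

variable {H : Type*} [NormedAddCommGroup H] [InnerProductSpace ℝ H]

theorem exists_norm_eq_one_mem_orthogonal_lt (q : Seminorm ℝ H)
    (hq : ¬ BddAbove (q '' Metric.closedBall 0 1)) (K : Submodule ℝ H) [FiniteDimensional ℝ K]
    (M : ℝ) : ∃ u ∈ Kᗮ, ‖u‖ = 1 ∧ M < q u := by
  obtain ⟨C, hC⟩ := (isCompact_closedBall (0 : K) 1).bddAbove_image
    (q.comp K.subtype).continuous_of_finiteDimensional.continuousOn
  obtain ⟨-, ⟨z, hz, rfl⟩, hMz⟩ := not_bddAbove_iff.1 hq (max M 0 + C)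
  rw [mem_closedBall_zero_iff] at hz
  set g := z - K.starProjection z
  have hgK : g ∈ Kᗮ := K.sub_starProjection_mem_orthogonal z
  have hg1 : ‖g‖ ≤ 1 := by
    have : g = Kᗮ.starProjection z := by simp [g, K.starProjection_orthogonal']
    exact this ▸ (Kᗮ.norm_starProjection_apply_le z).trans hz
  have hqf : q (K.starProjection z) ≤ C :=
    hC ⟨K.orthogonalProjectionOnto z,
      mem_closedBall_zero_iff.2 ((K.norm_orthogonalProjectionOnto_apply_le z).trans hz), rfl⟩
  have hqg : max M 0 < q g := by
    have := map_add_le_add q (K.starProjection z) g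
    rw [add_sub_cancel] at this
    linarith
  have hg0 : g ≠ 0 := by
    intro h
    simp [h] at hqg
  refine ⟨‖g‖⁻¹ • g, Kᗮ.smul_mem _ hgK, norm_smul_inv_norm hg0, ?_⟩
  calc M ≤ max M 0 := le_max_left _ _
    _ < q g := hqg
    _ ≤ ‖g‖⁻¹ * q g :=
      le_mul_of_one_le_left (apply_nonneg q g) ((one_le_inv₀ (norm_pos_iff.2 hg0)).2 hg1)
    _ = q (‖g‖⁻¹ • g) := by rw [map_smul_eq_mul, norm_inv, norm_norm]

theorem exists_orthonormal_not_bddAbove (q : Seminorm ℝ H)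
    (hq : ¬ BddAbove (q '' Metric.closedBall 0 1)) :
    ∃ x : ℕ → H, Orthonormal ℝ x ∧ ¬ BddAbove (range fun n => q (x n)) := by
  obtain ⟨x, hunit, hstep⟩ := exists_seq_of_forall_finset_exists (fun u : H => ‖u‖ = 1)
    (fun u v => inner ℝ u v = 0 ∧ q u + 1 < q v) fun s _ => by
      obtain ⟨u, huK, hu1, hqu⟩ := q.exists_norm_eq_one_mem_orthogonal_lt hq
        (Submodule.span ℝ s) (∑ v ∈ s, q v + 1)
      refine ⟨u, hu1, fun v hv => ⟨?_, ?_⟩⟩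
      · exact Submodule.inner_right_of_mem_orthogonal (Submodule.subset_span hv) huK
      · have := Finset.single_le_sum (fun w _ => apply_nonneg q w) hv
        linarith
  have hgrowth : ∀ n : ℕ, (n : ℝ) ≤ q (x n) := by
    intro n
    induction n with
    | zero => exact_mod_cast apply_nonneg q (x 0)
    | succ n ih => push_cast; linarith [(hstep n (n + 1) n.lt_succ_self).2]
  refine ⟨x, ⟨hunit, fun m n hmn => ?_⟩, fun ⟨C, hC⟩ => ?_⟩
  · rcases hmn.lt_or_gt with h | h
    · exact (hstep m n h).1
    · rw [real_inner_comm]; exact (hstep n m h).1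
  · obtain ⟨n, hn⟩ := exists_nat_gt C
    exact (hn.trans_le (hgrowth n)).not_ge (hC ⟨n, rfl⟩)

end Seminorm

theorem operator_vonNBounded_iff_bounded_along_orthonormal_general
    {H : Type*} [NormedAddCommGroup H] [InnerProductSpace ℝ H]
    {Y : Type*} [AddCommGroup Y] [Module ℝ Y] [TopologicalSpace Y]
    [IsTopologicalAddGroup Y] [ContinuousSMul ℝ Y] [LocallyConvexSpace ℝ Y]
    (T : H →ₗ[ℝ] Y) :
    Bornology.IsVonNBounded ℝ (T '' Metric.closedBall (0 : H) 1) ↔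
      ∀ x : ℕ → H, Orthonormal ℝ x →
        Bornology.IsVonNBounded ℝ (Set.range fun n => T (x n)) := by
  have hY := with_gaugeSeminormFamily (𝕜 := ℝ) (E := Y)
  constructor
  · intro hB x hx
    refine hB.subset (range_subset_iff.2 fun n => mem_image_of_mem T ?_)
    simp [hx.1 n]
  · intro h
    rw [hY.isVonNBounded_iff_seminorm_bddAbove]
    intro i
    by_contra hunb
    rw [← image_comp] at hunb
    obtain ⟨x, hx, hxunb⟩ :=
      ((gaugeSeminormFamily ℝ Y i).comp T).exists_orthonormal_not_bddAbove hunb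
    have hbdd := hY.isVonNBounded_iff_seminorm_bddAbove.1 (h x hx) i
    rw [← range_comp] at hbdd
    exact hxunb hbdd

/-- A linear map `T` from an infinite-dimensional real Hilbert space to a
locally convex TVS has `T(B_H)` von Neumann bounded iff `{T xₙ}` is von Neumann bounded
for every orthonormal sequence `(xₙ)`. -/
theorem operator_vonNBounded_iff_bounded_along_orthonormal
    {H : Type*} [NormedAddCommGroup H] [InnerProductSpace ℝ H] [CompleteSpace H]
    (hH : ¬ FiniteDimensional ℝ H)
    {Y : Type*} [AddCommGroup Y] [Module ℝ Y] [TopologicalSpace Y]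
    [IsTopologicalAddGroup Y] [ContinuousSMul ℝ Y] [LocallyConvexSpace ℝ Y]
    (T : H →ₗ[ℝ] Y) :
    Bornology.IsVonNBounded ℝ (T '' Metric.closedBall (0 : H) 1) ↔
      ∀ x : ℕ → H, Orthonormal ℝ x →
        Bornology.IsVonNBounded ℝ (Set.range fun n => T (x n)) :=
  operator_vonNBounded_iff_bounded_along_orthonormal_general T
end

section
/- Let H be an infinite-dimensional real Hilbert space, Y a locally convex topological vector space over ℝ, and T : H → Y a linear map. Then T(B_H) is von Neumann bounded in Y if and only if for every norm-bounded pairwise orthogonal sequence (x_n) in H the set {T x_n : n ∈ ℕ} is von Neumann bounded in Y. -/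
/-!
A locally convex topology is generated by the gauges of its absolutely convex neighbourhoods of
zero, so `T(B_H)` fails to be bounded exactly when some seminorm `q = p ∘ T` is unbounded on
`B_H`. Such a `q` is bounded on the unit ball of every finite-dimensional subspace `F`, hence,
splitting `x = P_F x + (x - P_F x)`, it is unbounded on `B_H ∩ Fᗮ`. Choosing each new vector
orthogonal to the span of the previous ones yields an orthogonal sequence in `B_H` on which `q`
is unbounded, so its image under `T` is not bounded.
-/

open Pointwise

theorem Seminorm.continuous_of_finiteDimensional_s5 {E : Type*} [NormedAddCommGroup E]
    [NormedSpace ℝ E] [FiniteDimensional ℝ E] (p : Seminorm ℝ E) : Continuous p :=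
  p.convexOn.locallyLipschitz.continuous

section InnerProductSpace

variable {H : Type*} [NormedAddCommGroup H] [InnerProductSpace ℝ H]

theorem Seminorm.exists_mem_orthogonal_lt (q : Seminorm ℝ H)
    (hq : ¬ BddAbove (q '' Metric.closedBall 0 1)) (F : Submodule ℝ H) [FiniteDimensional ℝ F]
    (r : ℝ) : ∃ z ∈ Fᗮ, ‖z‖ ≤ 1 ∧ r < q z := by
  obtain ⟨M, hM⟩ : BddAbove ((q.comp F.subtype) '' Metric.closedBall 0 1) :=
    (isCompact_closedBall 0 1).bddAbove_image
      (q.comp F.subtype).continuous_of_finiteDimensional_s5.continuousOn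
  obtain ⟨_, ⟨x, hx, rfl⟩, hrx⟩ := not_bddAbove_iff.1 hq (r + M)
  rw [mem_closedBall_zero_iff] at hx
  have hPx : q (F.starProjection x) ≤ M := hM ⟨F.orthogonalProjectionOnto x,
    mem_closedBall_zero_iff.2 ((F.norm_starProjection_apply_le x).trans hx), rfl⟩
  refine ⟨x - F.starProjection x, F.sub_starProjection_mem_orthogonal x, ?_, ?_⟩
  · rw [← Submodule.starProjection_orthogonal_val]
    exact (Fᗮ.norm_starProjection_apply_le x).trans hx
  · have := map_add_le_add q (x - F.starProjection x) (F.starProjection x)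
    rw [sub_add_cancel] at this
    linarith

theorem Seminorm.exists_orthogonal_seq_not_bddAbove (q : Seminorm ℝ H)
    (hq : ¬ BddAbove (q '' Metric.closedBall 0 1)) :
    ∃ e : ℕ → H, (∀ n, ‖e n‖ ≤ 1) ∧ Pairwise (fun n m ↦ inner ℝ (e n) (e m) = (0 : ℝ)) ∧
      ¬ BddAbove (Set.range (q ∘ e)) := by
  obtain ⟨e, he, hrel⟩ := exists_seq_of_forall_finset_exists (fun x : H ↦ ‖x‖ ≤ 1)
    (fun x y ↦ inner ℝ x y = (0 : ℝ) ∧ q x + 1 ≤ q y) fun s _ ↦ by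
      obtain ⟨z, hz, hz1, hqz⟩ :=
        q.exists_mem_orthogonal_lt hq (Submodule.span ℝ s) (∑ x ∈ s, q x + 1)
      refine ⟨z, hz1, fun x hx ↦
        ⟨Submodule.inner_right_of_mem_orthogonal (Submodule.subset_span hx) hz, ?_⟩⟩
      have := Finset.single_le_sum (fun y _ ↦ apply_nonneg q y) hx
      linarith
  have hgrowth : ∀ n : ℕ, (n : ℝ) ≤ q (e n) := by
    intro n
    induction n with
    | zero => simp
    | succ n ih => push_cast; linarith [(hrel n (n + 1) n.lt_succ_self).2]
  refine ⟨e, he, fun n m hnm ↦ ?_, fun ⟨R, hR⟩ ↦ ?_⟩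
  · rcases hnm.lt_or_gt with h | h
    · exact (hrel n m h).1
    · rw [real_inner_comm]
      exact (hrel m n h).1
  · obtain ⟨n, hn⟩ := exists_nat_gt R
    exact (hn.trans_le (hgrowth n)).not_ge (hR ⟨n, rfl⟩)

end InnerProductSpace

theorem LinearMap.isVonNBounded_image_of_isBounded {E Y : Type*} [NormedAddCommGroup E]
    [NormedSpace ℝ E] [AddCommGroup Y] [Module ℝ Y] [TopologicalSpace Y]
    [ContinuousConstSMul ℝ Y] (T : E →ₗ[ℝ] Y)
    (hT : Bornology.IsVonNBounded ℝ (T '' Metric.closedBall 0 1)) {S : Set E}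
    (hS : Bornology.IsBounded S) : Bornology.IsVonNBounded ℝ (T '' S) := by
  obtain ⟨r, hr⟩ := hS.subset_closedBall 0
  set c := max r 0
  have hball : T '' Metric.closedBall 0 r ⊆ c • T '' Metric.closedBall 0 1 := by
    rw [← image_smul_set, smul_unitClosedBall_of_nonneg (le_max_right r 0)]
    exact Set.image_mono (Metric.closedBall_subset_closedBall (le_max_left r 0))
  have hcT : Bornology.IsVonNBounded ℝ (c • T '' Metric.closedBall 0 1) := by
    simpa [Set.image_smul] using hT.image (c • ContinuousLinearMap.id ℝ Y)
  exact (hcT.subset hball).subset (Set.image_mono hr)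

theorem operator_vonNBounded_iff_bounded_along_orthogonal_general
    {H : Type*} [NormedAddCommGroup H] [InnerProductSpace ℝ H]
    {Y : Type*} [AddCommGroup Y] [Module ℝ Y] [TopologicalSpace Y]
    [IsTopologicalAddGroup Y] [ContinuousSMul ℝ Y] [LocallyConvexSpace ℝ Y]
    (T : H →ₗ[ℝ] Y) :
    Bornology.IsVonNBounded ℝ (T '' Metric.closedBall (0 : H) 1) ↔
      ∀ x : ℕ → H, (∀ n m, n ≠ m → inner ℝ (x n) (x m) = (0 : ℝ)) →
        (∃ C : ℝ, ∀ n, ‖x n‖ ≤ C) →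
        Bornology.IsVonNBounded ℝ (Set.range fun n => T (x n)) := by
  have hY := with_gaugeSeminormFamily (𝕜 := ℝ) (E := Y)
  refine ⟨fun hB x _ ⟨C, hC⟩ ↦ ?_, fun hseq ↦ ?_⟩
  · rw [← Function.comp_def, Set.range_comp]
    exact T.isVonNBounded_image_of_isBounded hB
      (isBounded_iff_forall_norm_le.2 ⟨C, Set.forall_mem_range.2 hC⟩)
  · rw [hY.isVonNBounded_iff_seminorm_bddAbove]
    intro U
    by_contra hU
    obtain ⟨e, he, horth, hunbdd⟩ :=
      ((gaugeSeminormFamily ℝ Y U).comp T).exists_orthogonal_seq_not_bddAbove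
        (by rwa [Set.image_image] at hU)
    refine hunbdd ?_
    simpa only [← Set.range_comp, Function.comp_def, Seminorm.comp_apply] using
      hY.isVonNBounded_iff_seminorm_bddAbove.1 (hseq e horth ⟨1, he⟩) U

/-- A linear map `T` from an infinite-dimensional real Hilbert space to a
locally convex TVS has `T(B_H)` von Neumann bounded iff `{T xₙ}` is von Neumann bounded
for every norm-bounded pairwise orthogonal sequence `(xₙ)`. -/
theorem operator_vonNBounded_iff_bounded_along_orthogonal
    {H : Type*} [NormedAddCommGroup H] [InnerProductSpace ℝ H] [CompleteSpace H]
    (hH : ¬ FiniteDimensional ℝ H)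
    {Y : Type*} [AddCommGroup Y] [Module ℝ Y] [TopologicalSpace Y]
    [IsTopologicalAddGroup Y] [ContinuousSMul ℝ Y] [LocallyConvexSpace ℝ Y]
    (T : H →ₗ[ℝ] Y) :
    Bornology.IsVonNBounded ℝ (T '' Metric.closedBall (0 : H) 1) ↔
      ∀ x : ℕ → H, (∀ n m, n ≠ m → inner ℝ (x n) (x m) = (0 : ℝ)) →
        (∃ C : ℝ, ∀ n, ‖x n‖ ≤ C) →
        Bornology.IsVonNBounded ℝ (Set.range fun n => T (x n)) :=
  operator_vonNBounded_iff_bounded_along_orthogonal_general T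
end

section
/- Let H be an infinite-dimensional real Hilbert space, F a real Fréchet space (a complete metrizable locally convex topological vector space over ℝ), and 𝒯 a set of continuous linear maps from H to F. Then the set ⋃_{T ∈ 𝒯} T(B_H) is relatively compact in F if and only if for every orthonormal sequence (x_n) in H the set {T x_n : T ∈ 𝒯, n ∈ ℕ} is relatively compact in F. -/
/-!
Compactness of `⋃ T(B_H)` in the complete space `F` means that every sequence `Tₙ vₙ` with
`Tₙ ∈ 𝒯`, `‖vₙ‖ ≤ 1` has a convergent subsequence. Testing the hypothesis on orthonormal
sequences through a given unit vector shows that `𝒯` is pointwise relatively compact, hence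
equicontinuous by Banach–Steinhaus. Pass to a subsequence with `vₙ ⇀ x` weakly. The weakly null
sequence `vₙ - x` is, along a further subsequence, asymptotically `cₙ eₙ` with `(eₙ)` orthonormal
and `cₙ` bounded (a gliding hump argument). Then `Tₙ vₙ` is the sum of `Tₙ x + cₙ Tₙ eₙ`, which
lies in a compact set, and `Tₙ (vₙ - x - cₙ eₙ)`, which tends to `0` by equicontinuity.
-/

open scoped RealInnerProductSpace
open Filter Topology Set Uniformity

section InnerProductSpace

variable {H : Type*} [NormedAddCommGroup H] [InnerProductSpace ℝ H]

lemma orthonormal_of_inner_eq_zero_of_lt {e : ℕ → H} (he : ∀ n, ‖e n‖ = 1)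
    (horth : ∀ m n, m < n → ⟪e m, e n⟫ = 0) : Orthonormal ℝ e := by
  refine ⟨he, fun {m n} hmn => ?_⟩
  rcases hmn.lt_or_gt with h | h
  · exact horth m n h
  · rw [real_inner_comm]
    exact horth n m h

lemma Submodule.exists_mem_norm_eq_one_smul_eq {K : Submodule ℝ H} (hK : K ≠ ⊥) {v : H}
    (hv : v ∈ K) : ∃ e ∈ K, ‖e‖ = 1 ∧ ‖v‖ • e = v := by
  rcases eq_or_ne v 0 with rfl | hv0
  · obtain ⟨w, hw, hw0⟩ := K.exists_mem_ne_zero_of_ne_bot hK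
    exact ⟨‖w‖⁻¹ • w, K.smul_mem _ hw, norm_smul_inv_norm hw0, by simp⟩
  · exact ⟨‖v‖⁻¹ • v, K.smul_mem _ hv, norm_smul_inv_norm hv0,
      smul_inv_smul₀ (norm_ne_zero_iff.mpr hv0) v⟩

lemma Submodule.orthogonal_ne_bot_of_not_finiteDimensional (hH : ¬ FiniteDimensional ℝ H)
    (W : Submodule ℝ H) [FiniteDimensional ℝ W] : Wᗮ ≠ ⊥ := by
  rw [Ne, Submodule.orthogonal_eq_bot_iff]
  rintro rfl
  exact hH (Module.Finite.equiv Submodule.topEquiv)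

lemma exists_orthonormal_seq_mem_orthogonal (hH : ¬ FiniteDimensional ℝ H) (W : Submodule ℝ H)
    [FiniteDimensional ℝ W] : ∃ e : ℕ → H, Orthonormal ℝ e ∧ ∀ n, e n ∈ Wᗮ := by
  obtain ⟨e, he, horth⟩ := exists_seq_of_forall_finset_exists (fun e : H => ‖e‖ = 1 ∧ e ∈ Wᗮ)
    (fun e e' => ⟪e, e'⟫ = 0) fun s _ => by
      let V := W ⊔ Submodule.span ℝ (s : Set H)
      obtain ⟨e, he, he1, -⟩ := Submodule.exists_mem_norm_eq_one_smul_eq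
        (V.orthogonal_ne_bot_of_not_finiteDimensional hH) (zero_mem _)
      exact ⟨e, ⟨he1, Submodule.orthogonal_le le_sup_left he⟩, fun x hx =>
        Submodule.inner_right_of_mem_orthogonal
          (Submodule.mem_sup_right (Submodule.subset_span hx)) he⟩
  exact ⟨e, orthonormal_of_inner_eq_zero_of_lt (fun n => (he n).1) horth, fun n => (he n).2⟩

lemma exists_orthonormal_seq_zero_eq (hH : ¬ FiniteDimensional ℝ H) {u : H} (hu : ‖u‖ = 1) :
    ∃ e : ℕ → H, Orthonormal ℝ e ∧ e 0 = u := by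
  obtain ⟨g, hg, hgu⟩ := exists_orthonormal_seq_mem_orthogonal hH (ℝ ∙ u)
  refine ⟨fun n => Nat.casesOn n u g, orthonormal_of_inner_eq_zero_of_lt ?_ ?_, rfl⟩
  · rintro (_ | n)
    exacts [hu, hg.1 n]
  · rintro (_ | m) (_ | n) hmn
    · omega
    · exact Submodule.inner_right_of_mem_orthogonal (Submodule.mem_span_singleton_self u) (hgu n)
    · omega
    · exact hg.2 (by omega)

lemma tendsto_starProjection_of_tendsto_inner (W : Submodule ℝ H) [FiniteDimensional ℝ W]
    {y : ℕ → H} (hy : ∀ z, Tendsto (fun k => ⟪y k, z⟫) atTop (𝓝 0)) :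
    Tendsto (fun k => W.starProjection (y k)) atTop (𝓝 0) := by
  let b := stdOrthonormalBasis ℝ W
  have hsum : ∀ k, W.starProjection (y k) = ∑ i, ⟪y k, (b i : H)⟫ • (b i : H) := fun k => by
    simp [b.starProjection_eq_sum_rankOne, real_inner_comm]
  simp only [hsum]
  simpa using tendsto_finsetSum Finset.univ fun i _ => (hy (b i)).smul_const (b i : H)

lemma exists_gt_norm_sub_smul_lt (hH : ¬ FiniteDimensional ℝ H) (W : Submodule ℝ H)
    [FiniteDimensional ℝ W] {y : ℕ → H} (hy : ∀ z, Tendsto (fun k => ⟪y k, z⟫) atTop (𝓝 0))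
    (k₀ : ℕ) {ε : ℝ} (hε : 0 < ε) :
    ∃ k, k₀ < k ∧ ∃ c ∈ Icc 0 ‖y k‖, ∃ e ∈ Wᗮ, ‖e‖ = 1 ∧ ‖y k - c • e‖ < ε := by
  have hsmall : ∀ᶠ k in atTop, ‖W.starProjection (y k)‖ < ε :=
    (tendsto_starProjection_of_tendsto_inner W hy).norm.eventually_lt_const (by simpa using hε)
  obtain ⟨k, hkε, hk⟩ := (hsmall.and (eventually_gt_atTop k₀)).exists
  -- `Wᗮ ≠ ⊥` provides a unit vector `e` even when the component of `y k` in `Wᗮ` vanishes.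
  obtain ⟨e, he, he1, hv⟩ := Submodule.exists_mem_norm_eq_one_smul_eq
    (W.orthogonal_ne_bot_of_not_finiteDimensional hH) (Wᗮ.starProjection_apply_mem (y k))
  refine ⟨k, hk, _, ⟨norm_nonneg _, Wᗮ.norm_starProjection_apply_le (y k)⟩, e, he, he1, ?_⟩
  rwa [hv, ← eq_sub_of_add_eq (W.starProjection_add_starProjection_orthogonal (y k))]

lemma exists_subseq_tendsto_sub_smul_orthonormal (hH : ¬ FiniteDimensional ℝ H) {y : ℕ → H}
    {C : ℝ} (hyC : ∀ k, ‖y k‖ ≤ C) (hy : ∀ z, Tendsto (fun k => ⟪y k, z⟫) atTop (𝓝 0)) :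
    ∃ (φ : ℕ → ℕ) (c : ℕ → ℝ) (e : ℕ → H), StrictMono φ ∧ Orthonormal ℝ e ∧
      (∀ n, c n ∈ Icc 0 C) ∧ Tendsto (fun n => y (φ n) - c n • e n) atTop (𝓝 0) := by
  classical
  -- Each later term `(k, c, e)` is within `1 / (k' + 1)` of `y k` for every earlier index `k'`;
  -- since the indices increase, the errors tend to `0`.
  obtain ⟨f, hf, hrel⟩ := exists_seq_of_forall_finset_exists
    (fun p : ℕ × ℝ × H => p.2.1 ∈ Icc 0 C ∧ ‖p.2.2‖ = 1)
    (fun p q => p.1 < q.1 ∧ ⟪p.2.2, q.2.2⟫ = 0 ∧ ‖y q.1 - q.2.1 • q.2.2‖ < 1 / ((p.1 : ℝ) + 1))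
    fun s _ => by
      let K := s.sup Prod.fst
      obtain ⟨k, hk, c, hc, e, he, he1, hke⟩ := exists_gt_norm_sub_smul_lt hH
        (Submodule.span ℝ (s.image fun p => p.2.2 : Set H)) hy K
        (ε := 1 / ((K : ℝ) + 1)) Nat.one_div_pos_of_nat
      refine ⟨(k, c, e), ⟨⟨hc.1, hc.2.trans (hyC k)⟩, he1⟩, fun p hp => ⟨?_, ?_, ?_⟩⟩
      · exact (Finset.le_sup (f := Prod.fst) hp).trans_lt hk
      · have hpW : p.2.2 ∈ Submodule.span ℝ (s.image fun p => p.2.2 : Set H) :=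
          Submodule.subset_span (Finset.mem_coe.mpr (Finset.mem_image_of_mem _ hp))
        exact Submodule.inner_right_of_mem_orthogonal hpW he
      · have hpK : (p.1 : ℝ) + 1 ≤ (K : ℝ) + 1 := by
          exact_mod_cast Nat.add_le_add_right (Finset.le_sup (f := Prod.fst) hp) 1
        exact hke.trans_le (one_div_le_one_div_of_le (by positivity) hpK)
  have hφ : StrictMono fun n => (f n).1 :=
    strictMono_nat_of_lt_succ fun n => (hrel n (n + 1) n.lt_succ_self).1
  refine ⟨fun n => (f n).1, fun n => (f n).2.1, fun n => (f n).2.2, hφ,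
    orthonormal_of_inner_eq_zero_of_lt (fun n => (hf n).2) fun m n h => (hrel m n h).2.1,
    fun n => (hf n).1, ?_⟩
  rw [← tendsto_add_atTop_iff_nat 1]
  refine squeeze_zero_norm (fun n => ?_) tendsto_one_div_add_atTop_nhds_zero_nat
  refine (hrel n (n + 1) n.lt_succ_self).2.2.le.trans
    (one_div_le_one_div_of_le (Nat.cast_add_one_pos n) ?_)
  exact_mod_cast Nat.add_le_add_right (hφ.id_le n) 1

lemma exists_subseq_tendsto_inner [CompleteSpace H] {u : ℕ → H} {C : ℝ}
    (hu : ∀ k, ‖u k‖ ≤ C) :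
    ∃ (φ : ℕ → ℕ) (x : H), StrictMono φ ∧
      ∀ z, Tendsto (fun k => ⟪u (φ k), z⟫) atTop (𝓝 ⟪x, z⟫) := by
  -- Sequential Banach–Alaoglu in the separable Hilbert space `N`, then Riesz representation.
  let N := (Submodule.span ℝ (range u)).topologicalClosure
  have : TopologicalSpace.SeparableSpace N := by
    have := (countable_range u).isSeparable.span (R := ℝ) |>.closure
    rw [← Submodule.topologicalClosure_coe] at this
    exact this.separableSpace
  let f : ℕ → WeakDual ℝ N := fun k => StrongDual.toWeakDual ((innerSL ℝ (u k)).comp N.subtypeL)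
  have hf : ∀ k, f k ∈ WeakDual.toStrongDual ⁻¹' Metric.closedBall 0 C := fun k => by
    have := ((innerSL ℝ (u k)).opNorm_comp_le N.subtypeL).trans
      (mul_le_mul ((innerSL_apply_norm ℝ (u k)).trans_le (hu k)) N.norm_subtypeL_le
        (norm_nonneg _) ((norm_nonneg _).trans (hu k)))
    exact mem_closedBall_zero_iff.mpr (by simpa [f] using this)
  obtain ⟨a, -, φ, hφ, ha⟩ := WeakDual.isSeqCompact_closedBall ℝ N 0 C hf
  let x : N := (InnerProductSpace.toDual ℝ N).symm (WeakDual.toStrongDual a)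
  have hu_mem : ∀ k, u k ∈ N := fun k =>
    Submodule.le_topologicalClosure _ (Submodule.subset_span (mem_range_self k))
  refine ⟨φ, x, hφ, fun z => ?_⟩
  have hf_apply : ∀ k, f k (N.orthogonalProjectionOnto z) = ⟪u k, z⟫ := fun k => by
    show ⟪u k, (N.orthogonalProjectionOnto z : H)⟫ = ⟪u k, z⟫
    exact N.inner_orthogonalProjectionOnto_eq_of_mem_left ⟨u k, hu_mem k⟩ z
  have ha_apply : a (N.orthogonalProjectionOnto z) = ⟪(x : H), z⟫ := by
    rw [← N.inner_orthogonalProjectionOnto_eq_of_mem_left x z,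
      InnerProductSpace.toDual_symm_apply]
    rfl
  simpa only [Function.comp_def, hf_apply, ha_apply] using
    ((WeakDual.eval_continuous (N.orthogonalProjectionOnto z)).tendsto a).comp ha

end InnerProductSpace

lemma totallyBounded_of_forall_exists_tendsto_subseq {X : Type*} [UniformSpace X] {s : Set X}
    (h : ∀ u : ℕ → X, (∀ n, u n ∈ s) →
      ∃ a, ∃ φ : ℕ → ℕ, StrictMono φ ∧ Tendsto (u ∘ φ) atTop (𝓝 a)) :
    TotallyBounded s := by
  intro V hV
  by_contra! hcover
  obtain ⟨u, hus, hu⟩ : ∃ u : ℕ → X, (∀ n, u n ∈ s) ∧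
      ∀ n m, m < n → u m ∉ UniformSpace.ball (u n) V := by
    simp only [not_subset, mem_iUnion₂, not_exists, exists_prop] at hcover
    simpa only [forall_and, forall_mem_image, not_and] using! seq_of_forall_finite_exists hcover
  obtain ⟨a, φ, hφ, hlim⟩ := h u hus
  obtain ⟨N, hN⟩ := hlim.cauchySeq.mem_entourage hV
  exact hu (φ (N + 1)) (φ N) (hφ N.lt_succ_self) (hN (N + 1) N N.le_succ le_rfl)

section Operators

variable {E : Type*} [AddCommGroup E] [Module ℝ E] [UniformSpace E]
  {F : Type*} [AddCommGroup F] [Module ℝ F] [UniformSpace F] [IsUniformAddGroup F]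

lemma uniformEquicontinuous_of_isCompact_closure_setOf_apply [IsUniformAddGroup E]
    [ContinuousSMul ℝ E] [BarrelledSpace ℝ E] [ContinuousSMul ℝ F] [LocallyConvexSpace ℝ F] {𝒯 : Set (E →L[ℝ] F)}
    (h𝒯 : ∀ v, IsCompact (closure {y : F | ∃ T ∈ 𝒯, y = T v})) :
    UniformEquicontinuous fun T : 𝒯 => ((T : E →L[ℝ] F) : E → F) :=
  PolynormableSpace.banach_steinhaus fun v => ((h𝒯 v).isVonNBounded ℝ).subset <| by
    rintro _ ⟨T, rfl⟩
    exact subset_closure ⟨T, T.2, rfl⟩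

lemma tendsto_apply_of_uniformEquicontinuous {𝒯 : Set (E →L[ℝ] F)}
    (h𝒯 : UniformEquicontinuous fun T : 𝒯 => ((T : E →L[ℝ] F) : E → F))
    {T : ℕ → E →L[ℝ] F} (hT : ∀ n, T n ∈ 𝒯) {w : ℕ → E} (hw : Tendsto w atTop (𝓝 0)) :
    Tendsto (fun n => T n (w n)) atTop (𝓝 0) := by
  intro U hU
  have hV : {p : F × F | p.2 - p.1 ∈ U} ∈ 𝓤 F := by
    rw [uniformity_eq_comap_nhds_zero F]
    exact preimage_mem_comap hU
  rw [mem_map]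
  filter_upwards [hw.eventually (h𝒯.equicontinuous 0 _ hV)] with n hn
  simpa using hn ⟨T n, hT n⟩

end Operators

section HilbertDomain

variable {H : Type*} [NormedAddCommGroup H] [InnerProductSpace ℝ H]
  {F : Type*} [AddCommGroup F] [Module ℝ F]

lemma isCompact_closure_setOf_apply [TopologicalSpace F] [ContinuousConstSMul ℝ F] [R1Space F]
    (hH : ¬ FiniteDimensional ℝ H) {𝒯 : Set (H →L[ℝ] F)}
    (h𝒯 : ∀ x : ℕ → H, Orthonormal ℝ x →
      IsCompact (closure {y : F | ∃ T ∈ 𝒯, ∃ n : ℕ, y = T (x n)}))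
    (v : H) : IsCompact (closure {y : F | ∃ T ∈ 𝒯, y = T v}) := by
  obtain ⟨u, -, hu, huv⟩ := Submodule.exists_mem_norm_eq_one_smul_eq
    ((⊥ : Submodule ℝ H).orthogonal_ne_bot_of_not_finiteDimensional hH) (v := v) (by simp)
  obtain ⟨x, hx, hx0⟩ := exists_orthonormal_seq_zero_eq hH hu
  refine ((h𝒯 x hx).image (continuous_const_smul ‖v‖)).closure_of_subset ?_
  rintro _ ⟨T, hT, rfl⟩
  exact ⟨T u, subset_closure ⟨T, hT, 0, by rw [hx0]⟩, by simp only [← map_smul, huv]⟩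

lemma exists_tendsto_subseq_apply_of_norm_le_one [CompleteSpace H]
    (hH : ¬ FiniteDimensional ℝ H) [UniformSpace F] [IsUniformAddGroup F] [ContinuousSMul ℝ F]
    [LocallyConvexSpace ℝ F] [FirstCountableTopology F] {𝒯 : Set (H →L[ℝ] F)}
    (h𝒯 : ∀ x : ℕ → H, Orthonormal ℝ x →
      IsCompact (closure {y : F | ∃ T ∈ 𝒯, ∃ n : ℕ, y = T (x n)}))
    {T : ℕ → H →L[ℝ] F} (hT : ∀ n, T n ∈ 𝒯) {v : ℕ → H} (hv : ∀ n, ‖v n‖ ≤ 1) :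
    ∃ a, ∃ φ : ℕ → ℕ, StrictMono φ ∧ Tendsto (fun n => T (φ n) (v (φ n))) atTop (𝓝 a) := by
  have hpt := isCompact_closure_setOf_apply hH h𝒯
  obtain ⟨φ, x, hφ, hweak⟩ := exists_subseq_tendsto_inner hv
  let y := fun k => v (φ k) - x
  have hyC : ∀ k, ‖y k‖ ≤ 1 + ‖x‖ := fun k => (norm_sub_le _ _).trans (by gcongr; exact hv _)
  have hy : ∀ z, Tendsto (fun k => ⟪y k, z⟫) atTop (𝓝 0) := fun z => by
    simpa [y, inner_sub_left] using (hweak z).sub_const ⟪x, z⟫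
  obtain ⟨ψ, c, e, hψ, he, hc, hclose⟩ := exists_subseq_tendsto_sub_smul_orthonormal hH hyC hy
  let K := (fun p : F × ℝ × F => p.1 + p.2.1 • p.2.2) ''
    (closure {y | ∃ S ∈ 𝒯, y = S x} ×ˢ Icc 0 (1 + ‖x‖) ×ˢ
      closure {y | ∃ S ∈ 𝒯, ∃ n, y = S (e n)})
  have hK : IsCompact K := ((hpt x).prod (isCompact_Icc.prod (h𝒯 e he))).image (by fun_prop)
  let j := fun n => φ (ψ n)
  have hmem : ∀ n, T (j n) (x + c n • e n) ∈ K := fun n =>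
    ⟨(T (j n) x, c n, T (j n) (e n)),
      ⟨subset_closure ⟨_, hT _, rfl⟩, hc n, subset_closure ⟨_, hT _, n, rfl⟩⟩, by simp⟩
  obtain ⟨a, -, χ, hχ, ha⟩ := hK.isSeqCompact hmem
  have hnull := tendsto_apply_of_uniformEquicontinuous
    (uniformEquicontinuous_of_isCompact_closure_setOf_apply hpt) (fun n => hT (j n)) hclose
  refine ⟨a, j ∘ χ, (hφ.comp hψ).comp hχ, ?_⟩
  have hsum := ha.add (hnull.comp hχ.tendsto_atTop)
  rw [add_zero] at hsum
  refine hsum.congr fun n => ?_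
  simp only [Function.comp_apply, ← map_add, y]
  congr 1
  abel

end HilbertDomain

theorem set_of_operators_relCompact_iff_relCompact_along_orthonormal_general
    {H : Type*} [NormedAddCommGroup H] [InnerProductSpace ℝ H] [CompleteSpace H]
    (hH : ¬ FiniteDimensional ℝ H)
    {F : Type*} [AddCommGroup F] [Module ℝ F] [UniformSpace F] [IsUniformAddGroup F]
    [ContinuousSMul ℝ F] [LocallyConvexSpace ℝ F]
    [FirstCountableTopology F] [CompleteSpace F]
    (𝒯 : Set (H →L[ℝ] F)) :
    IsCompact (closure (⋃ T ∈ 𝒯, T '' Metric.closedBall (0 : H) 1)) ↔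
      ∀ x : ℕ → H, Orthonormal ℝ x →
        IsCompact (closure {y : F | ∃ T ∈ 𝒯, ∃ n : ℕ, y = T (x n)}) := by
  refine ⟨fun hK x hx => hK.closure_of_subset ?_, fun h𝒯 => ?_⟩
  · rintro _ ⟨T, hT, n, rfl⟩
    exact subset_closure (mem_biUnion hT ⟨x n, by simp [hx.1 n], rfl⟩)
  refine isCompact_iff_totallyBounded_isComplete.mpr
    ⟨(totallyBounded_of_forall_exists_tendsto_subseq fun g hg => ?_).closure,
      isClosed_closure.isComplete⟩
  choose T hT v hv hTv using fun n => mem_iUnion₂.mp (hg n)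
  obtain ⟨a, φ, hφ, ha⟩ := exists_tendsto_subseq_apply_of_norm_le_one hH h𝒯 hT
    fun n => by simpa using hv n
  exact ⟨a, φ, hφ, by simpa only [Function.comp_def, hTv] using ha⟩

/-- For a set `𝒯` of continuous linear maps from an infinite-dimensional
real Hilbert space to a real Fréchet space `F`, the set `⋃_{T ∈ 𝒯} T(B_H)` is
relatively compact iff `{T xₙ : T ∈ 𝒯, n ∈ ℕ}` is relatively compact for every
orthonormal sequence `(xₙ)`. -/
theorem set_of_operators_relCompact_iff_relCompact_along_orthonormal
    {H : Type*} [NormedAddCommGroup H] [InnerProductSpace ℝ H] [CompleteSpace H]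
    (hH : ¬ FiniteDimensional ℝ H)
    {F : Type*} [AddCommGroup F] [Module ℝ F] [UniformSpace F] [IsUniformAddGroup F]
    [ContinuousSMul ℝ F] [LocallyConvexSpace ℝ F]
    [FirstCountableTopology F] [T2Space F] [CompleteSpace F]
    (𝒯 : Set (H →L[ℝ] F)) :
    IsCompact (closure (⋃ T ∈ 𝒯, T '' Metric.closedBall (0 : H) 1)) ↔
      ∀ x : ℕ → H, Orthonormal ℝ x →
        IsCompact (closure {y : F | ∃ T ∈ 𝒯, ∃ n : ℕ, y = T (x n)}) :=
  set_of_operators_relCompact_iff_relCompact_along_orthonormal_general hH 𝒯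
end

section
/- Let H be an infinite-dimensional real Hilbert space, F a real Fréchet space (a complete metrizable locally convex topological vector space over ℝ), and 𝒯 a set of continuous linear maps from H to F. Then the set ⋃_{T ∈ 𝒯} T(B_H) is relatively compact in F if and only if for every norm-bounded pairwise orthogonal sequence (x_n) in H the set {T x_n : T ∈ 𝒯, n ∈ ℕ} is relatively compact in F. -/
/-!
If `v₁, …, v_d` is orthonormal, relative compactness of `{T vᵢ : T ∈ 𝒯}` makes the images of the
unit ball of `E = span {vᵢ}` relatively compact. Writing `y = P_E y + P_{Eᗮ} y`, a failure of total
boundedness of `⋃ T(B_H)` at some scale therefore persists, at half that scale, for the images of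
`B_H ∩ Eᗮ`, for every finite-dimensional `E`. Choosing greedily `Tₙ xₙ` far from all previous
`Tₘ xₘ`, with `xₙ ∈ B_H` orthogonal to all previous `xₘ`, yields an orthogonal sequence along
which the images are uniformly separated, contradicting relative compactness.
-/

open Set Topology Pointwise Submodule RealInnerProductSpace Metric

section UniformAddGroup

variable {G : Type*} [AddCommGroup G] [UniformSpace G] [IsUniformAddGroup G]

lemma totallyBounded_iff_subset_finite_add {s : Set G} :
    TotallyBounded s ↔ ∀ U ∈ 𝓝 (0 : G), ∃ t : Set G, t.Finite ∧ s ⊆ t + U := by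
  simp only [totallyBounded_iff_subset_finite_iUnion_nhds_zero, iUnion_vadd_set, vadd_eq_add]

lemma TotallyBounded.exists_lt_sub_mem {s U : Set G} (hs : TotallyBounded s) (hU : U ∈ 𝓝 0)
    {g : ℕ → G} (hg : ∀ n, g n ∈ s) : ∃ m n, m < n ∧ g n - g m ∈ U := by
  obtain ⟨V, hV, hVU⟩ := exists_nhds_half_neg hU
  obtain ⟨t, ht, hst⟩ := totallyBounded_iff_subset_finite_add.1 hs V hV
  have hnear : ∀ n, ∃ y ∈ t, g n - y ∈ V := fun n => by
    obtain ⟨y, hy, v, hv, hyv⟩ := hst (hg n)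
    exact ⟨y, hy, by rwa [← hyv, add_sub_cancel_left]⟩
  choose c hct hcV using hnear
  obtain ⟨m, n, hmn, hc⟩ := ht.exists_lt_map_eq_of_forall_mem hct
  refine ⟨m, n, hmn, ?_⟩
  simpa [hc] using hVU _ (hcV n) _ (hcV m)

lemma not_subset_finite_add_of_subset_add {S A C U V : Set G} (hSAC : S ⊆ A + C)
    (hA : TotallyBounded A) (hV : V ∈ 𝓝 0) (hVU : V + V ⊆ U)
    (hS : ∀ t : Set G, t.Finite → ¬ S ⊆ t + U) {t : Set G} (ht : t.Finite) :
    ¬ C ⊆ t + V := by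
  intro hC
  obtain ⟨s, hs, hAs⟩ := totallyBounded_iff_subset_finite_add.1 hA V hV
  refine hS (s + t) (hs.add ht) ?_
  calc S ⊆ (s + V) + (t + V) := hSAC.trans (add_subset_add hAs hC)
    _ = (s + t) + (V + V) := add_add_add_comm _ _ _ _
    _ ⊆ (s + t) + U := add_subset_add_left hVU

end UniformAddGroup

section Operators

variable {H : Type*} [NormedAddCommGroup H] [InnerProductSpace ℝ H]

lemma apply_mem_smul_biUnion_image_closedBall {F : Type*} [AddCommGroup F] [Module ℝ F]
    [TopologicalSpace F] {𝒯 : Set (H →L[ℝ] F)} {T : H →L[ℝ] F} (hT : T ∈ 𝒯) {y : H} {r : ℝ}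
    (hr : 0 < r) (hy : ‖y‖ ≤ r) :
    T y ∈ r • ⋃ T ∈ 𝒯, T '' closedBall (0 : H) 1 := by
  refine ⟨T (r⁻¹ • y), mem_biUnion hT ⟨r⁻¹ • y, ?_, rfl⟩, ?_⟩
  · rw [mem_closedBall_zero_iff, norm_smul, norm_inv, Real.norm_of_nonneg hr.le]
    exact inv_mul_le_one_of_le₀ hy hr.le
  · simp only [← map_smul, smul_inv_smul₀ hr.ne']

lemma biUnion_image_closedBall_subset_add {F : Type*} [AddCommGroup F] [Module ℝ F]
    [TopologicalSpace F] (𝒯 : Set (H →L[ℝ] F)) (E : Submodule ℝ H) [E.HasOrthogonalProjection] :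
    ⋃ T ∈ 𝒯, T '' closedBall (0 : H) 1 ⊆
      (⋃ T ∈ 𝒯, T '' (closedBall 0 1 ∩ E)) + ⋃ T ∈ 𝒯, T '' (closedBall 0 1 ∩ Eᗮ) := by
  simp only [subset_def, mem_iUnion₂, mem_image, mem_closedBall_zero_iff]
  rintro _ ⟨T, hT, y, hy, rfl⟩
  refine ⟨T (E.starProjection y), mem_biUnion hT ⟨_, ⟨?_, E.starProjection_apply_mem y⟩, rfl⟩,
    T (Eᗮ.starProjection y), mem_biUnion hT ⟨_, ⟨?_, Eᗮ.starProjection_apply_mem y⟩, rfl⟩, ?_⟩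
  · exact mem_closedBall_zero_iff.2 ((E.norm_starProjection_apply_le y).trans hy)
  · exact mem_closedBall_zero_iff.2 ((Eᗮ.norm_starProjection_apply_le y).trans hy)
  · simp only [← map_add, starProjection_add_starProjection_orthogonal]

lemma OrthonormalBasis.sum_inner_smul_coe {E : Submodule ℝ H} {ι : Type*} [Fintype ι]
    (b : OrthonormalBasis ι ℝ E) {y : H} (hy : y ∈ E) : ∑ i, ⟪(b i : H), y⟫ • (b i : H) = y := by
  simpa using congrArg Subtype.val (b.sum_repr' ⟨y, hy⟩)

lemma biUnion_image_closedBall_inter_subset_image_sum {F : Type*} [AddCommGroup F] [Module ℝ F]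
    [TopologicalSpace F] {𝒯 : Set (H →L[ℝ] F)} {E : Submodule ℝ H} {ι : Type*} [Fintype ι]
    (b : OrthonormalBasis ι ℝ E) {K : Set F} (hK : ∀ T ∈ 𝒯, ∀ i, T (b i) ∈ K) :
    ⋃ T ∈ 𝒯, T '' (closedBall 0 1 ∩ E) ⊆ (fun p : (ι → ℝ) × (ι → F) => ∑ i, p.1 i • p.2 i) ''
      (univ.pi (fun _ => Icc (-1) 1) ×ˢ univ.pi (fun _ => K)) := by
  simp only [subset_def, mem_iUnion₂, mem_image]
  rintro _ ⟨T, hT, y, ⟨hy, hyE⟩, rfl⟩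
  refine ⟨(fun i => ⟪(b i : H), y⟫, fun i => T (b i)), ⟨fun i _ => ?_, fun i _ => hK T hT i⟩, ?_⟩
  · rw [mem_Icc, ← abs_le]
    calc |⟪(b i : H), y⟫| ≤ ‖(b i : H)‖ * ‖y‖ := abs_real_inner_le_norm _ _
      _ ≤ 1 * 1 := by
        gcongr
        · exact (b.orthonormal.1 i).le
        · exact mem_closedBall_zero_iff.1 hy
      _ = 1 := one_mul 1
  · simp only [← map_smul, ← map_sum, b.sum_inner_smul_coe hyE]

lemma totallyBounded_biUnion_image_closedBall_inter {F : Type*} [AddCommGroup F] [Module ℝ F]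
    [UniformSpace F] [IsUniformAddGroup F] [ContinuousSMul ℝ F] {𝒯 : Set (H →L[ℝ] F)}
    (hyp : ∀ x : ℕ → H, (∀ n m, n ≠ m → ⟪x n, x m⟫ = 0) → (∃ C : ℝ, ∀ n, ‖x n‖ ≤ C) →
      IsCompact (closure {y : F | ∃ T ∈ 𝒯, ∃ n : ℕ, y = T (x n)}))
    (E : Submodule ℝ H) [FiniteDimensional ℝ E] :
    TotallyBounded (⋃ T ∈ 𝒯, T '' (closedBall 0 1 ∩ E)) := by
  set b := stdOrthonormalBasis ℝ E
  set x : ℕ → H := fun n => if h : n < Module.finrank ℝ E then (b ⟨n, h⟩ : H) else 0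
  have horth : ∀ n m, n ≠ m → ⟪x n, x m⟫ = 0 := by
    intro n m hnm
    simp only [x]
    split_ifs
    · exact b.orthonormal.2 (by simpa [Fin.ext_iff] using hnm)
    all_goals simp
  have hx : ∀ n, ‖x n‖ ≤ 1 := fun n => by
    simp only [x]
    split_ifs
    · exact (b.orthonormal.1 _).le
    · simp
  have hK := hyp x horth ⟨1, hx⟩
  have hbK : ∀ T ∈ 𝒯, ∀ i, T (b i) ∈ closure {y : F | ∃ T ∈ 𝒯, ∃ n : ℕ, y = T (x n)} :=
    fun T hT i => subset_closure ⟨T, hT, i, by simp [x]⟩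
  refine IsCompact.totallyBounded ?_ |>.subset <|
    biUnion_image_closedBall_inter_subset_image_sum b hbK
  exact ((isCompact_univ_pi fun _ => isCompact_Icc).prod (isCompact_univ_pi fun _ => hK)).image
    (continuous_finsetSum _ fun i _ => by fun_prop)

lemma exists_orthogonal_seq_separated_of_not_totallyBounded {F : Type*} [AddCommGroup F]
    [Module ℝ F] [UniformSpace F] [IsUniformAddGroup F] {𝒯 : Set (H →L[ℝ] F)}
    (hfin : ∀ E : Submodule ℝ H, FiniteDimensional ℝ E →
      TotallyBounded (⋃ T ∈ 𝒯, T '' (closedBall 0 1 ∩ E)))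
    (hS : ¬ TotallyBounded (⋃ T ∈ 𝒯, T '' closedBall (0 : H) 1)) :
    ∃ W ∈ 𝓝 (0 : F), ∃ (T : ℕ → H →L[ℝ] F) (x : ℕ → H), (∀ n, T n ∈ 𝒯) ∧ (∀ n, ‖x n‖ ≤ 1) ∧
      (∀ n m, n ≠ m → ⟪x n, x m⟫ = 0) ∧ ∀ m n, m < n → T n (x n) - T m (x m) ∉ W := by
  simp only [totallyBounded_iff_subset_finite_add, not_forall, not_exists, not_and] at hS
  obtain ⟨U, hU, hSU⟩ := hS
  obtain ⟨W, hW, hWU⟩ := exists_nhds_zero_half hU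
  have step : ∀ s : Set ((H →L[ℝ] F) × H), s.Finite → ∃ c : (H →L[ℝ] F) × H,
      c.1 ∈ 𝒯 ∧ ‖c.2‖ ≤ 1 ∧ c.2 ∈ (span ℝ (Prod.snd '' s))ᗮ ∧ ∀ d ∈ s, c.1 c.2 - d.1 d.2 ∉ W := by
    intro s hs
    have : FiniteDimensional ℝ (span ℝ (Prod.snd '' s)) :=
      FiniteDimensional.span_of_finite ℝ (hs.image _)
    have hfar := not_subset_finite_add_of_subset_add (biUnion_image_closedBall_subset_add 𝒯 _)
      (hfin _ this) hW (add_subset_iff.2 hWU) hSU (hs.image fun d => d.1 d.2)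
    simp only [not_subset, mem_iUnion₂, mem_image] at hfar
    obtain ⟨_, ⟨T, hT, y, ⟨hy, hyE⟩, rfl⟩, hTy⟩ := hfar
    refine ⟨(T, y), hT, mem_closedBall_zero_iff.1 hy, hyE, fun d hd hW' => hTy ?_⟩
    exact ⟨d.1 d.2, mem_image_of_mem _ hd, _, hW', add_sub_cancel _ _⟩
  obtain ⟨c, hc⟩ := seq_of_forall_finite_exists step
  refine ⟨W, hW, fun n => (c n).1, fun n => (c n).2, fun n => (hc n).1, fun n => (hc n).2.1,
    ?_, fun m n hmn => (hc n).2.2.2 (c m) (mem_image_of_mem c hmn)⟩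
  have hprev : ∀ m n, m < n → (c m).2 ∈ span ℝ (Prod.snd '' (c '' Iio n)) := fun m n hmn =>
    subset_span (mem_image_of_mem _ (mem_image_of_mem c hmn))
  intro n m hnm
  rcases hnm.lt_or_gt with h | h
  · exact inner_right_of_mem_orthogonal (hprev n m h) (hc m).2.2.1
  · exact inner_left_of_mem_orthogonal (hprev m n h) (hc n).2.2.1

end Operators

theorem set_of_operators_relCompact_iff_relCompact_along_orthogonal_general
    {H : Type*} [NormedAddCommGroup H] [InnerProductSpace ℝ H]
    {F : Type*} [AddCommGroup F] [Module ℝ F] [UniformSpace F] [IsUniformAddGroup F]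
    [ContinuousSMul ℝ F]
    [CompleteSpace F]
    (𝒯 : Set (H →L[ℝ] F)) :
    IsCompact (closure (⋃ T ∈ 𝒯, T '' Metric.closedBall (0 : H) 1)) ↔
      ∀ x : ℕ → H, (∀ n m, n ≠ m → inner ℝ (x n) (x m) = (0 : ℝ)) →
        (∃ C : ℝ, ∀ n, ‖x n‖ ≤ C) →
        IsCompact (closure {y : F | ∃ T ∈ 𝒯, ∃ n : ℕ, y = T (x n)}) := by
  refine ⟨fun hU x _ ⟨C, hC⟩ => ?_, fun hyp => ?_⟩
  · refine (hU.smul (max C 1)).closure_of_subset ?_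
    rintro _ ⟨T, hT, n, rfl⟩
    exact smul_set_mono subset_closure <| apply_mem_smul_biUnion_image_closedBall hT
      (lt_max_of_lt_right one_pos) ((hC n).trans (le_max_left C 1))
  · refine TotallyBounded.isCompact_of_isClosed (.closure ?_) isClosed_closure
    by_contra hS
    obtain ⟨W, hW, T, x, hT, hx, horth, hsep⟩ :=
      exists_orthogonal_seq_separated_of_not_totallyBounded
        (fun E _ => totallyBounded_biUnion_image_closedBall_inter hyp E) hS
    obtain ⟨m, n, hmn, hmem⟩ := (hyp x horth ⟨1, hx⟩).totallyBounded.exists_lt_sub_mem hW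
      fun n => subset_closure ⟨T n, hT n, n, rfl⟩
    exact hsep m n hmn hmem

/-- For a set `𝒯` of continuous linear maps from an infinite-dimensional
real Hilbert space to a real Fréchet space `F`, the set `⋃_{T ∈ 𝒯} T(B_H)` is
relatively compact iff `{T xₙ : T ∈ 𝒯, n ∈ ℕ}` is relatively compact for every
norm-bounded pairwise orthogonal sequence `(xₙ)`. -/
theorem set_of_operators_relCompact_iff_relCompact_along_orthogonal
    {H : Type*} [NormedAddCommGroup H] [InnerProductSpace ℝ H] [CompleteSpace H]
    (hH : ¬ FiniteDimensional ℝ H)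
    {F : Type*} [AddCommGroup F] [Module ℝ F] [UniformSpace F] [IsUniformAddGroup F]
    [ContinuousSMul ℝ F] [LocallyConvexSpace ℝ F]
    [FirstCountableTopology F] [T2Space F] [CompleteSpace F]
    (𝒯 : Set (H →L[ℝ] F)) :
    IsCompact (closure (⋃ T ∈ 𝒯, T '' Metric.closedBall (0 : H) 1)) ↔
      ∀ x : ℕ → H, (∀ n m, n ≠ m → inner ℝ (x n) (x m) = (0 : ℝ)) →
        (∃ C : ℝ, ∀ n, ‖x n‖ ≤ C) →
        IsCompact (closure {y : F | ∃ T ∈ 𝒯, ∃ n : ℕ, y = T (x n)}) :=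
  set_of_operators_relCompact_iff_relCompact_along_orthogonal_general 𝒯
end

section
/- Let H be an infinite-dimensional real Hilbert space, F a real Fréchet space (a complete metrizable locally convex topological vector space over ℝ), and T : H → F a continuous linear map. Then T(B_H) is relatively compact in F if and only if T maps every orthonormal sequence of H to a sequence converging to 0 in F. -/
/-!
An orthonormal sequence tends weakly to zero (Bessel), so if `T(B_H)` is relatively compact
the sequence `T xₙ` lies in a compact set on which continuous functionals separate points,
and its only cluster point is `0`. Conversely, if `T(B_H)` is not totally bounded, there is a
neighbourhood `U` of `0` such that no finite-dimensional `E` has `T(B_H ∩ Eᗮ) ⊆ U`; otherwise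
`T(B_H)` would lie in the compact set `T(B_E)` plus `U`. Choosing unit vectors `xₙ` orthogonal
to `x₀, …, xₙ₋₁` with `T xₙ ∉ U` gives an orthonormal sequence whose image does not tend to `0`.
-/

open Filter Set Metric Topology

section Orthonormal

variable {𝕜 H ι : Type*} [RCLike 𝕜] [NormedAddCommGroup H] [InnerProductSpace 𝕜 H]

theorem Orthonormal.tendsto_inner_cofinite_zero {v : ι → H} (hv : Orthonormal 𝕜 v) (y : H) :
    Tendsto (fun i => inner 𝕜 y (v i)) cofinite (𝓝 0) := by
  rw [tendsto_zero_iff_norm_tendsto_zero]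
  have hsq : Tendsto (fun i => ‖inner 𝕜 (v i) y‖ ^ 2) cofinite (𝓝 0) :=
    (hv.inner_products_summable y).tendsto_cofinite_zero
  simpa only [norm_inner_symm y, Real.sqrt_sq (norm_nonneg _), Real.sqrt_zero] using hsq.sqrt

theorem Orthonormal.tendsto_dual_cofinite_zero [CompleteSpace H] {v : ι → H}
    (hv : Orthonormal 𝕜 v) (f : StrongDual 𝕜 H) :
    Tendsto (fun i => f (v i)) cofinite (𝓝 0) := by
  simpa only [InnerProductSpace.toDual_symm_apply] using
    hv.tendsto_inner_cofinite_zero ((InnerProductSpace.toDual 𝕜 H).symm f)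

theorem exists_orthonormal_seq_of_forall_exists_mem_orthogonal (P : H → Prop)
    (h : ∀ E : Submodule 𝕜 H, FiniteDimensional 𝕜 E → ∃ z ∈ Eᗮ, ‖z‖ = 1 ∧ P z) :
    ∃ v : ℕ → H, Orthonormal 𝕜 v ∧ ∀ n, P (v n) := by
  obtain ⟨v, hvP, hvorth⟩ := exists_seq_of_forall_finset_exists (fun z => ‖z‖ = 1 ∧ P z)
    (fun x y => inner 𝕜 x y = 0) fun s _ => by
      obtain ⟨z, hz, hz1, hPz⟩ := h (Submodule.span 𝕜 s) inferInstance
      exact ⟨z, ⟨hz1, hPz⟩, fun x hx =>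
        (Submodule.mem_orthogonal _ _).1 hz x (Submodule.subset_span hx)⟩
  refine ⟨v, ⟨fun n => (hvP n).1, fun m n hmn => ?_⟩, fun n => (hvP n).2⟩
  rcases hmn.lt_or_gt with hlt | hgt
  · exact hvorth m n hlt
  · exact inner_eq_zero_symm.1 (hvorth n m hgt)

end Orthonormal

theorem IsCompact.tendsto_nhds_of_forall_dual {R V ι : Type*} [Ring R] [TopologicalSpace R]
    [T2Space R] [AddCommGroup V] [TopologicalSpace V] [Module R V] [SeparatingDual R V]
    {K : Set V} (hK : IsCompact K) {l : Filter ι} {u : ι → V} {a : V}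
    (hmem : ∀ᶠ i in l, u i ∈ K) (h : ∀ f : StrongDual R V, Tendsto (fun i => f (u i)) l (𝓝 (f a))) :
    Tendsto u l (𝓝 a) := by
  refine hK.tendsto_nhds_of_unique_mapClusterPt hmem fun x _ hx => ?_
  by_contra hne
  obtain ⟨f, hf⟩ := SeparatingDual.exists_separating_of_ne (R := R) hne
  have hfx : MapClusterPt (f x) l (fun i => f (u i)) := hx.tendsto_comp (f.continuous.tendsto x)
  exact hf (eq_of_nhds_neBot (hfx.neBot.mono (inf_le_inf_left _ (h f))))

namespace ContinuousLinearMap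

variable {𝕜 H F : Type*} [RCLike 𝕜] [NormedAddCommGroup H] [InnerProductSpace 𝕜 H]
  [AddCommGroup F] [Module 𝕜 F]

theorem tendsto_cofinite_zero_of_orthonormal [CompleteSpace H] [TopologicalSpace F]
    [SeparatingDual 𝕜 F] (T : H →L[𝕜] F) (hT : IsCompact (closure (T '' closedBall 0 1)))
    {ι : Type*} {v : ι → H} (hv : Orthonormal 𝕜 v) :
    Tendsto (fun i => T (v i)) cofinite (𝓝 0) := by
  refine hT.tendsto_nhds_of_forall_dual (R := 𝕜) (Eventually.of_forall fun i => ?_) fun f => ?_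
  · exact subset_closure (mem_image_of_mem T (by simp [hv.1 i]))
  · simpa using hv.tendsto_dual_cofinite_zero (f.comp T)

theorem apply_mem_of_norm_le_one [TopologicalSpace F] (T : H →L[𝕜] F) {U : Set F}
    (hU : Balanced 𝕜 U) (hU0 : (0 : F) ∈ U) {S : Submodule 𝕜 H} (hS : ∀ z ∈ S, ‖z‖ = 1 → T z ∈ U)
    {z : H} (hz : z ∈ S) (hz1 : ‖z‖ ≤ 1) : T z ∈ U := by
  rcases eq_or_ne z 0 with rfl | hz0
  · simpa using hU0
  have hnorm : ‖z‖ ≠ 0 := norm_ne_zero_iff.2 hz0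
  have hunit : T ((‖z‖⁻¹ : 𝕜) • z) ∈ U :=
    hS _ (S.smul_mem _ hz) (by simp [norm_smul, hnorm])
  have hz_eq : z = (‖z‖ : 𝕜) • (‖z‖⁻¹ : 𝕜) • z := by
    rw [smul_smul, mul_inv_cancel₀ (by exact_mod_cast hnorm), one_smul]
  rw [hz_eq, map_smul]
  exact hU.smul_mem (by simpa using hz1) hunit

theorem totallyBounded_image_closedBall_of_forall_orthogonal [UniformSpace F]
    [IsUniformAddGroup F] [ContinuousSMul 𝕜 F] (T : H →L[𝕜] F)
    (h : ∀ U ∈ 𝓝 (0 : F), ∃ E : Submodule 𝕜 H, FiniteDimensional 𝕜 E ∧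
      ∀ z ∈ Eᗮ, ‖z‖ = 1 → T z ∈ U) :
    TotallyBounded (T '' closedBall 0 1) := by
  rw [totallyBounded_iff_subset_finite_iUnion_nhds_zero]
  intro V hV
  obtain ⟨W, hW, hWV⟩ := exists_nhds_zero_half hV
  have hU : balancedCore 𝕜 W ∈ 𝓝 (0 : F) := balancedCore_mem_nhds_zero hW
  obtain ⟨E, hE, hEU⟩ := h _ hU
  have hEball : IsCompact (T '' (((↑) : E → H) '' closedBall 0 1)) :=
    ((isCompact_closedBall 0 1).image continuous_subtype_val).image T.continuous
  obtain ⟨t, ht, hcov⟩ :=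
    totallyBounded_iff_subset_finite_iUnion_nhds_zero.1 hEball.totallyBounded _ hU
  refine ⟨t, ht, ?_⟩
  rintro _ ⟨v, hv, rfl⟩
  rw [mem_closedBall_zero_iff] at hv
  have hPv : T (E.starProjection v) ∈ T '' (((↑) : E → H) '' closedBall 0 1) :=
    ⟨_, ⟨E.orthogonalProjectionOnto v, by simpa using (E.norm_starProjection_apply_le v).trans hv,
      rfl⟩, rfl⟩
  obtain ⟨c, hc, w, hw, hcw⟩ := by simpa only [mem_iUnion₂, mem_vadd_set] using hcov hPv
  have hrest : T (v - E.starProjection v) ∈ balancedCore 𝕜 W :=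
    T.apply_mem_of_norm_le_one (balancedCore_balanced W) (mem_of_mem_nhds hU) hEU
      (E.sub_starProjection_mem_orthogonal v)
      (by simpa using (Eᗮ.norm_starProjection_apply_le v).trans hv)
  refine mem_iUnion₂.2 ⟨c, hc, w + T (v - E.starProjection v),
    hWV _ (balancedCore_subset W hw) _ (balancedCore_subset W hrest), ?_⟩
  change c + w = _ at hcw
  change c + (w + _) = T v
  rw [← add_assoc, hcw, map_sub, add_sub_cancel]

end ContinuousLinearMap

theorem operator_relCompact_iff_null_along_orthonormal_general
    {H : Type*} [NormedAddCommGroup H] [InnerProductSpace ℝ H] [CompleteSpace H]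
    {F : Type*} [AddCommGroup F] [Module ℝ F] [UniformSpace F] [IsUniformAddGroup F]
    [ContinuousSMul ℝ F] [LocallyConvexSpace ℝ F]
    [T2Space F] [CompleteSpace F]
    (T : H →L[ℝ] F) :
    IsCompact (closure (T '' Metric.closedBall (0 : H) 1)) ↔
      ∀ x : ℕ → H, Orthonormal ℝ x →
        Filter.Tendsto (fun n => T (x n)) Filter.atTop (nhds 0) := by
  refine ⟨fun hK x hx => ?_, fun hnull => ?_⟩
  · simpa only [Nat.cofinite_eq_atTop] using T.tendsto_cofinite_zero_of_orthonormal hK hx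
  refine (T.totallyBounded_image_closedBall_of_forall_orthogonal fun U hU => ?_).closure
    |>.isCompact_of_isClosed isClosed_closure
  by_contra! hU_far
  obtain ⟨x, hx, hxU⟩ :=
    exists_orthonormal_seq_of_forall_exists_mem_orthogonal (fun z => T z ∉ U) hU_far
  obtain ⟨n, hn⟩ := ((hnull x hx).eventually_mem hU).exists
  exact hxU n hn

/-- A continuous linear map `T` from an infinite-dimensional real Hilbert
space to a real Fréchet space `F` has `T(B_H)` relatively compact iff `T` maps every
orthonormal sequence to a null sequence in `F`. -/
theorem operator_relCompact_iff_null_along_orthonormal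
    {H : Type*} [NormedAddCommGroup H] [InnerProductSpace ℝ H] [CompleteSpace H]
    (hH : ¬ FiniteDimensional ℝ H)
    {F : Type*} [AddCommGroup F] [Module ℝ F] [UniformSpace F] [IsUniformAddGroup F]
    [ContinuousSMul ℝ F] [LocallyConvexSpace ℝ F]
    [FirstCountableTopology F] [T2Space F] [CompleteSpace F]
    (T : H →L[ℝ] F) :
    IsCompact (closure (T '' Metric.closedBall (0 : H) 1)) ↔
      ∀ x : ℕ → H, Orthonormal ℝ x →
        Filter.Tendsto (fun n => T (x n)) Filter.atTop (nhds 0) :=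
  operator_relCompact_iff_null_along_orthonormal_general T
end

section
/- Let H be an infinite-dimensional real Hilbert space, F a real Fréchet space (a complete metrizable locally convex topological vector space over ℝ), and T : H → F a continuous linear map. Then T(B_H) is relatively compact in F if and only if T maps every norm-bounded pairwise orthogonal sequence of H to a sequence converging to 0 in F. -/
/-!
A bounded orthogonal sequence is weakly null by Bessel's inequality, so its image under `T` is
weakly null; inside a compact set of a space whose dual separates points this forces convergence
to `0`. Conversely, if `T` kills bounded orthogonal sequences then for every neighbourhood `U` of
`0` there is a finite-dimensional `V` with `T (Vᗮ ∩ B_H) ⊆ U`: otherwise one picks, one after the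
other, unit-ball vectors orthogonal to all previous ones whose images avoid `U`. Splitting
`B_H ⊆ (V ∩ B_H) + (Vᗮ ∩ B_H)` then shows that `T (B_H)` is within `U` of a compact set, hence is
totally bounded.
-/
open Filter Set Metric Topology
open scoped Pointwise

section Orthogonal

variable {𝕜 E ι : Type*} [RCLike 𝕜] [NormedAddCommGroup E] [InnerProductSpace 𝕜 E]

theorem orthonormal_normalize_of_orthogonal {x : ι → E}
    (hx : Pairwise fun i j => inner 𝕜 (x i) (x j) = 0) :
    Orthonormal 𝕜 fun i : Function.support x => ((‖x i‖ : 𝕜)⁻¹) • x i := by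
  refine ⟨fun i => ?_, fun i j hij => ?_⟩
  · simp [norm_smul, inv_mul_cancel₀ (norm_ne_zero_iff.2 i.2)]
  · simp [inner_smul_left, inner_smul_right, hx (Subtype.coe_ne_coe.2 hij)]

theorem tendsto_inner_cofinite_zero_of_orthogonal {x : ι → E}
    (hx : Pairwise fun i j => inner 𝕜 (x i) (x j) = 0) {C : ℝ} (hC : ∀ i, ‖x i‖ ≤ C) (y : E) :
    Tendsto (fun i => inner 𝕜 y (x i)) cofinite (𝓝 0) := by
  -- `v i = 0` where `x i = 0`, so only the support of `x` contributes to the sum below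
  set v : ι → E := fun i => ((‖x i‖ : 𝕜)⁻¹) • x i
  have hv : Summable fun i => ‖inner 𝕜 (v i) y‖ ^ 2 := by
    have hsub : Summable ((fun i => ‖inner 𝕜 (v i) y‖ ^ 2) ∘ ((↑) : Function.support x → ι)) :=
      (orthonormal_normalize_of_orthogonal hx).inner_products_summable y
    rwa [summable_subtype_iff_indicator, indicator_eq_self.2] at hsub
    exact Function.support_subset_iff'.2 fun i hi => by simp [v, Function.notMem_support.1 hi]
  have hle : ∀ i, ‖inner 𝕜 y (x i)‖ ^ 2 ≤ C ^ 2 * ‖inner 𝕜 (v i) y‖ ^ 2 := by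
    intro i
    have hxv : x i = (‖x i‖ : 𝕜) • v i := by
      rcases eq_or_ne (x i) 0 with h | h
      · simp [h]
      · simp [v, smul_smul, h]
    rw [hxv, inner_smul_right, norm_mul, norm_inner_symm, mul_pow, RCLike.norm_ofReal, abs_norm]
    gcongr
    exact hC i
  have hsq := (hv.mul_left (C ^ 2)).of_nonneg_of_le (fun _ => by positivity) hle
  have hnorm := hsq.tendsto_cofinite_zero.sqrt
  simp only [Real.sqrt_sq (norm_nonneg _), Real.sqrt_zero] at hnorm
  exact tendsto_zero_iff_norm_tendsto_zero.2 hnorm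

theorem tendsto_dual_cofinite_zero_of_orthogonal [CompleteSpace E] {x : ι → E}
    (hx : Pairwise fun i j => inner 𝕜 (x i) (x j) = 0) {C : ℝ} (hC : ∀ i, ‖x i‖ ≤ C)
    (g : StrongDual 𝕜 E) : Tendsto (fun i => g (x i)) cofinite (𝓝 0) := by
  simpa [InnerProductSpace.toDual_symm_apply] using
    tendsto_inner_cofinite_zero_of_orthogonal hx hC ((InnerProductSpace.toDual 𝕜 E).symm g)

theorem Submodule.closedBall_subset_add_orthogonal (V : Submodule 𝕜 E) [V.HasOrthogonalProjection]
    (r : ℝ) :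
    closedBall (0 : E) r ⊆
      ((↑) '' closedBall (0 : V) r : Set E) + ((Vᗮ : Set E) ∩ closedBall 0 r) := by
  intro x hx
  rw [mem_closedBall_zero_iff] at hx
  refine ⟨V.orthogonalProjectionOnto x, ⟨_, ?_, rfl⟩, Vᗮ.starProjection x, ⟨?_, ?_⟩, ?_⟩
  · exact mem_closedBall_zero_iff.2 ((V.norm_orthogonalProjectionOnto_apply_le x).trans hx)
  · exact Vᗮ.starProjection_apply_mem x
  · exact mem_closedBall_zero_iff.2 ((Vᗮ.norm_starProjection_apply_le x).trans hx)
  · exact V.starProjection_add_starProjection_orthogonal x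

theorem exists_finiteDimensional_mapsTo_orthogonal {X : Type*} [TopologicalSpace X] {g : E → X}
    {a : X} (hg : ∀ x : ℕ → E, (Pairwise fun i j => inner 𝕜 (x i) (x j) = 0) →
      (∀ n, ‖x n‖ ≤ 1) → Tendsto (g ∘ x) atTop (𝓝 a))
    {U : Set X} (hU : U ∈ 𝓝 a) :
    ∃ V : Submodule 𝕜 E, FiniteDimensional 𝕜 V ∧ MapsTo g ((Vᗮ : Set E) ∩ closedBall 0 1) U := by
  by_contra! h
  have hextend : ∀ s : Finset E, (∀ y ∈ s, ‖y‖ ≤ 1 ∧ g y ∉ U) →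
      ∃ z, (‖z‖ ≤ 1 ∧ g z ∉ U) ∧ ∀ y ∈ s, inner 𝕜 y z = 0 := by
    intro s _
    obtain ⟨z, hzV, hz1, hzU⟩ : ∃ z ∈ (Submodule.span 𝕜 (s : Set E))ᗮ, ‖z‖ ≤ 1 ∧ g z ∉ U := by
      simpa [MapsTo] using h (Submodule.span 𝕜 (s : Set E)) inferInstance
    exact ⟨z, ⟨hz1, hzU⟩,
      fun y hy => (Submodule.mem_orthogonal _ _).1 hzV y (Submodule.subset_span hy)⟩
  have : Std.Symm fun y z : E => inner 𝕜 y z = 0 := ⟨fun _ _ h => inner_eq_zero_symm.1 h⟩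
  obtain ⟨e, he, horth⟩ := exists_seq_of_forall_finset_exists' _ _ hextend
  obtain ⟨n, hn⟩ := ((hg e horth fun n => (he n).1).eventually_mem hU).exists
  exact (he n).2 hn

end Orthogonal

theorem totallyBounded_of_forall_subset_add {G : Type*} [AddCommGroup G] [UniformSpace G]
    [IsUniformAddGroup G] {s : Set G}
    (h : ∀ U ∈ 𝓝 (0 : G), ∃ K : Set G, TotallyBounded K ∧ s ⊆ K + U) : TotallyBounded s := by
  rw [totallyBounded_iff_subset_finite_iUnion_nhds_zero]
  intro W hW
  obtain ⟨U, hU, hUW⟩ := exists_nhds_zero_half hW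
  obtain ⟨K, hK, hsK⟩ := h U hU
  obtain ⟨t, ht, hKt⟩ := totallyBounded_iff_subset_finite_iUnion_nhds_zero.1 hK U hU
  simp only [iUnion_vadd_set, vadd_eq_add] at hKt ⊢
  refine ⟨t, ht, hsK.trans ?_⟩
  calc K + U ⊆ t + U + U := add_subset_add_right hKt
    _ = t + (U + U) := add_assoc _ _ _
    _ ⊆ t + W := add_subset_add_left (add_subset_iff.2 hUW)

theorem IsCompact.tendsto_of_forall_dual_tendsto {R F ι : Type*} [Ring R] [TopologicalSpace R]
    [T2Space R] [AddCommGroup F] [TopologicalSpace F] [Module R F] [SeparatingDual R F]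
    {s : Set F} (hs : IsCompact s) {l : Filter ι} {u : ι → F} {a : F}
    (hmem : ∀ᶠ i in l, u i ∈ s)
    (hu : ∀ f : StrongDual R F, Tendsto (fun i => f (u i)) l (𝓝 (f a))) :
    Tendsto u l (𝓝 a) :=
  hs.tendsto_nhds_of_unique_mapClusterPt hmem fun b _ hb => by
    by_contra hne
    obtain ⟨f, hf⟩ := SeparatingDual.exists_separating_of_ne (R := R) hne
    exact hf (eq_of_nhds_neBot (ClusterPt.mono (hb.tendsto_comp (f.continuous.tendsto b)) (hu f)))

theorem ContinuousLinearMap.isCompact_closure_image_closedBall {E F : Type*}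
    [NormedAddCommGroup E] [NormedSpace ℝ E] [AddCommGroup F] [Module ℝ F] [TopologicalSpace F]
    [ContinuousConstSMul ℝ F] [T1Space F] {T : E →L[ℝ] F}
    (h : IsCompact (closure (T '' closedBall 0 1))) {r : ℝ} (hr : 0 ≤ r) :
    IsCompact (closure (T '' closedBall 0 r)) := by
  rw [← smul_unitClosedBall_of_nonneg hr, image_smul_set, closure_smul₀]
  exact h.smul r

theorem operator_relCompact_iff_null_along_orthogonal_general
    {H : Type*} [NormedAddCommGroup H] [InnerProductSpace ℝ H] [CompleteSpace H]
    {F : Type*} [AddCommGroup F] [Module ℝ F] [UniformSpace F] [IsUniformAddGroup F]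
    [ContinuousSMul ℝ F] [LocallyConvexSpace ℝ F]
    [T2Space F] [CompleteSpace F]
    (T : H →L[ℝ] F) :
    IsCompact (closure (T '' Metric.closedBall (0 : H) 1)) ↔
      ∀ x : ℕ → H, (∀ n m, n ≠ m → inner ℝ (x n) (x m) = (0 : ℝ)) →
        (∃ C : ℝ, ∀ n, ‖x n‖ ≤ C) →
        Filter.Tendsto (fun n => T (x n)) Filter.atTop (nhds 0) := by
  constructor
  · rintro hK x hx ⟨C, hC⟩
    have hxK : ∀ n, T (x n) ∈ closure (T '' closedBall 0 C) := fun n =>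
      subset_closure (mem_image_of_mem T (mem_closedBall_zero_iff.2 (hC n)))
    rw [← Nat.cofinite_eq_atTop]
    refine (T.isCompact_closure_image_closedBall hK ((norm_nonneg _).trans (hC 0))
      ).tendsto_of_forall_dual_tendsto (R := ℝ) (Eventually.of_forall hxK) fun f => ?_
    simpa using tendsto_dual_cofinite_zero_of_orthogonal (fun n m h => hx n m h) hC (f ∘L T)
  · intro hseq
    have hnull : ∀ x : ℕ → H, (Pairwise fun i j => inner ℝ (x i) (x j) = 0) →
        (∀ n, ‖x n‖ ≤ 1) → Tendsto (T ∘ x) atTop (𝓝 0) :=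
      fun x hx h1 => hseq x (fun _ _ h => hx h) ⟨1, h1⟩
    refine (totallyBounded_of_forall_subset_add fun U hU => ?_).closure.isCompact_of_isClosed
      isClosed_closure
    obtain ⟨V, _, hVU⟩ := exists_finiteDimensional_mapsTo_orthogonal hnull hU
    refine ⟨T '' ((↑) '' closedBall (0 : V) 1),
      (((isCompact_closedBall _ _).image continuous_subtype_val).image T.continuous).totallyBounded,
      ?_⟩
    calc T '' closedBall 0 1
        ⊆ T '' (((↑) '' closedBall (0 : V) 1 : Set H) + ((Vᗮ : Set H) ∩ closedBall 0 1)) :=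
          image_mono (V.closedBall_subset_add_orthogonal 1)
      _ = T '' ((↑) '' closedBall (0 : V) 1) + T '' ((Vᗮ : Set H) ∩ closedBall 0 1) := image_add T
      _ ⊆ _ := add_subset_add_left hVU.image_subset

/-- A continuous linear map `T` from an infinite-dimensional real Hilbert
space to a real Fréchet space `F` has `T(B_H)` relatively compact iff `T` maps every
norm-bounded pairwise orthogonal sequence to a null sequence in `F`. -/
theorem operator_relCompact_iff_null_along_orthogonal
    {H : Type*} [NormedAddCommGroup H] [InnerProductSpace ℝ H] [CompleteSpace H]
    (hH : ¬ FiniteDimensional ℝ H)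
    {F : Type*} [AddCommGroup F] [Module ℝ F] [UniformSpace F] [IsUniformAddGroup F]
    [ContinuousSMul ℝ F] [LocallyConvexSpace ℝ F]
    [FirstCountableTopology F] [T2Space F] [CompleteSpace F]
    (T : H →L[ℝ] F) :
    IsCompact (closure (T '' Metric.closedBall (0 : H) 1)) ↔
      ∀ x : ℕ → H, (∀ n m, n ≠ m → inner ℝ (x n) (x m) = (0 : ℝ)) →
        (∃ C : ℝ, ∀ n, ‖x n‖ ≤ C) →
        Filter.Tendsto (fun n => T (x n)) Filter.atTop (nhds 0) :=
  operator_relCompact_iff_null_along_orthogonal_general T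
end

section
/- Let H be an infinite-dimensional real Hilbert space, F a real Fréchet space (a complete metrizable locally convex topological vector space over ℝ), and T : H → F a continuous linear map. If for every maximal orthonormal set S in H (an orthonormal subset of H whose closed linear span is all of H) the image T(S) is relatively compact in F, then T maps every orthonormal sequence of H to a sequence converging to 0 in F. -/
/-!
If `T xₙ → y` along an orthonormal sequence, then the normalized block sums
`wₘ = 2^{-m/2} ∑_{2^m ≤ i < 2^{m+1}} xᵢ` form another orthonormal sequence, so by hypothesis
`T wₘ` stays in a compact, hence bounded, set. The block averages `2^{-m/2} T wₘ` then tend to `0`,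
while by local convexity they tend to `y`; thus `y = 0`. Since `T xₙ` also lies in a compact set,
`0` is its only cluster point, and `T xₙ → 0`.
-/

open Filter Finset Function Topology

theorem Orthonormal.inner_sum_sum {𝕜 E ι : Type*} [RCLike 𝕜] [SeminormedAddCommGroup E]
    [InnerProductSpace 𝕜 E] [DecidableEq ι] {v : ι → E} (hv : Orthonormal 𝕜 v)
    (s t : Finset ι) : inner 𝕜 (∑ i ∈ s, v i) (∑ j ∈ t, v j) = #(s ∩ t) := by
  simp [sum_inner, inner_sum, orthonormal_iff_ite.mp hv, inter_comm]

theorem Orthonormal.exists_superset_topologicalClosure_span_eq_top {ι H : Type*}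
    [NormedAddCommGroup H] [InnerProductSpace ℝ H] [CompleteSpace H] {x : ι → H}
    (hx : Orthonormal ℝ x) :
    ∃ S : Set H, Set.range x ⊆ S ∧ Orthonormal ℝ ((↑) : S → H) ∧
      (Submodule.span ℝ S).topologicalClosure = ⊤ := by
  obtain ⟨S, b, hxS, hb⟩ := hx.toSubtypeRange.exists_hilbertBasis_extension
  refine ⟨S, hxS, hb ▸ b.orthonormal, ?_⟩
  simpa [hb] using b.dense_span

theorem Filter.Tendsto.centerMass_of_smallSets {ι κ E : Type*} [AddCommGroup E] [Module ℝ E]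
    [TopologicalSpace E] [LocallyConvexSpace ℝ E] {L : Filter κ} {l : Filter ι} {f : κ → E}
    {y : E} (hf : Tendsto f L (𝓝 y)) {B : ι → Finset κ}
    (hB : Tendsto (fun m => (B m : Set κ)) l L.smallSets) {w : κ → ℝ} (hw₀ : ∀ i, 0 ≤ w i)
    (hw : ∀ᶠ m in l, 0 < ∑ i ∈ B m, w i) :
    Tendsto (fun m => (B m).centerMass w f) l (𝓝 y) := by
  refine (LocallyConvexSpace.convex_basis (𝕜 := ℝ) y).tendsto_right_iff.2
    fun s ⟨hs, hconv⟩ => ?_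
  filter_upwards [hB.eventually (eventually_smallSets_subset.2 (hf hs)), hw] with m hm hwm
  exact hconv.centerMass_mem (fun i _ => hw₀ i) hwm fun i hi => hm hi

def dyadicBlock (m : ℕ) : Finset ℕ := Finset.Ico (2 ^ m) (2 ^ (m + 1))

theorem card_dyadicBlock (m : ℕ) : #(dyadicBlock m) = 2 ^ m := by
  simp [dyadicBlock, pow_succ]; omega

theorem pairwise_disjoint_dyadicBlock : Pairwise (Disjoint on dyadicBlock) := fun m n hmn => by
  rw [onFun, ← disjoint_coe]
  simpa [dyadicBlock] using
    (pow_right_mono₀ (one_le_two (α := ℕ))).pairwise_disjoint_on_Ico_succ hmn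

theorem tendsto_dyadicBlock_smallSets :
    Tendsto (fun m => (dyadicBlock m : Set ℕ)) atTop atTop.smallSets := by
  refine tendsto_smallSets_iff.2 fun t ht => ?_
  obtain ⟨N, hN⟩ := mem_atTop_sets.1 ht
  filter_upwards [eventually_ge_atTop N] with m hm i hi
  simp only [dyadicBlock, coe_Ico, Set.mem_Ico] at hi
  exact hN i (hm.trans (Nat.lt_two_pow_self.le.trans hi.1))

theorem tendsto_card_dyadicBlock : Tendsto (fun m => #(dyadicBlock m)) atTop atTop := by
  simpa only [card_dyadicBlock] using tendsto_pow_atTop_atTop_of_one_lt one_lt_two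

noncomputable def normalizedBlockSum {ι κ M : Type*} [AddCommMonoid M] [Module ℝ M] (x : ι → M)
    (B : κ → Finset ι) (k : κ) : M :=
  (√(#(B k) : ℝ))⁻¹ • ∑ i ∈ B k, x i

theorem map_normalizedBlockSum {ι κ M N G : Type*} [AddCommMonoid M] [Module ℝ M]
    [AddCommMonoid N] [Module ℝ N] [FunLike G M N] [LinearMapClass G ℝ M N] (T : G)
    (x : ι → M) (B : κ → Finset ι) (k : κ) :
    T (normalizedBlockSum x B k) = normalizedBlockSum (T ∘ x) B k := by
  simp [normalizedBlockSum, map_sum]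

theorem Orthonormal.normalizedBlockSum {ι κ E : Type*} [SeminormedAddCommGroup E]
    [InnerProductSpace ℝ E] {x : ι → E} (hx : Orthonormal ℝ x) {B : κ → Finset ι}
    (hB : Pairwise (Disjoint on B)) (hne : ∀ k, (B k).Nonempty) :
    Orthonormal ℝ (normalizedBlockSum x B) := by
  classical
  refine orthonormal_iff_ite.2 fun k l => ?_
  simp only [_root_.normalizedBlockSum, real_inner_smul_left, real_inner_smul_right,
    hx.inner_sum_sum]
  split_ifs with hkl
  · subst hkl
    have hpos : (0 : ℝ) < #(B k) := by exact_mod_cast (hne k).card_pos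
    rw [inter_self, ← mul_assoc, ← mul_inv, Real.mul_self_sqrt hpos.le, inv_mul_cancel₀ hpos.ne']
  · simp [disjoint_iff_inter_eq_empty.mp (hB hkl)]

theorem eq_zero_of_tendsto_of_isVonNBounded_normalizedBlockSum {ι E : Type*} [AddCommGroup E]
    [Module ℝ E] [TopologicalSpace E] [LocallyConvexSpace ℝ E] [T2Space E] {l : Filter ι}
    [l.NeBot] {f : ℕ → E} {y : E} (hf : Tendsto f atTop (𝓝 y)) {B : ι → Finset ℕ}
    (hB : Tendsto (fun m => (B m : Set ℕ)) l atTop.smallSets)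
    (hcard : Tendsto (fun m => #(B m)) l atTop) {S : Set E} (hS : Bornology.IsVonNBounded ℝ S)
    (hfS : ∀ᶠ m in l, normalizedBlockSum f B m ∈ S) : y = 0 := by
  have hcard' : Tendsto (fun m => (#(B m) : ℝ)) l atTop :=
    tendsto_natCast_atTop_atTop.comp hcard
  have hpos : ∀ᶠ m in l, (0 : ℝ) < #(B m) := hcard'.eventually_gt_atTop 0
  have hy : Tendsto (fun m => (B m).centerMass 1 f) l (𝓝 y) :=
    hf.centerMass_of_smallSets hB (fun _ => zero_le_one) (by simpa using hpos)
  have h0 : Tendsto (fun m => (√(#(B m) : ℝ))⁻¹ • normalizedBlockSum f B m) l (𝓝 0) :=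
    hS.smul_tendsto_zero hfS (tendsto_inv_atTop_zero.comp (Real.tendsto_sqrt_atTop.comp hcard'))
  refine tendsto_nhds_unique hy (h0.congr' ?_)
  filter_upwards [hpos] with m hm
  simp only [normalizedBlockSum, Finset.centerMass, smul_smul, Pi.one_apply, one_smul,
    sum_const, nsmul_one]
  rw [← mul_inv, Real.mul_self_sqrt hm.le]

section Hilbert

variable {H F : Type*} [NormedAddCommGroup H] [InnerProductSpace ℝ H] [CompleteSpace H]

theorem exists_isCompact_forall_mem_of_orthonormal [TopologicalSpace F] (T : H → F)
    (hbases : ∀ S : Set H, Orthonormal ℝ ((↑) : S → H) →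
      (Submodule.span ℝ S).topologicalClosure = ⊤ → IsCompact (closure (T '' S)))
    {ι : Type*} {x : ι → H} (hx : Orthonormal ℝ x) :
    ∃ K : Set F, IsCompact K ∧ ∀ i, T (x i) ∈ K := by
  obtain ⟨S, hxS, hS, hSdense⟩ := hx.exists_superset_topologicalClosure_span_eq_top
  exact ⟨_, hbases S hS hSdense, fun i => subset_closure ⟨x i, hxS ⟨i, rfl⟩, rfl⟩⟩

theorem eq_zero_of_tendsto_orthonormal [AddCommGroup F] [Module ℝ F] [TopologicalSpace F]
    [IsTopologicalAddGroup F] [ContinuousSMul ℝ F] [LocallyConvexSpace ℝ F] [T2Space F]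
    (T : H →L[ℝ] F)
    (hbases : ∀ S : Set H, Orthonormal ℝ ((↑) : S → H) →
      (Submodule.span ℝ S).topologicalClosure = ⊤ → IsCompact (closure (T '' S)))
    {x : ℕ → H} (hx : Orthonormal ℝ x) {y : F} (hy : Tendsto (fun n => T (x n)) atTop (𝓝 y)) :
    y = 0 := by
  have hw : Orthonormal ℝ (normalizedBlockSum x dyadicBlock) :=
    hx.normalizedBlockSum pairwise_disjoint_dyadicBlock fun m => by simp [dyadicBlock, pow_succ]
  obtain ⟨K, hK, hwK⟩ := exists_isCompact_forall_mem_of_orthonormal T hbases hw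
  refine eq_zero_of_tendsto_of_isVonNBounded_normalizedBlockSum hy tendsto_dyadicBlock_smallSets
    tendsto_card_dyadicBlock (hK.isVonNBounded ℝ) (.of_forall fun m => ?_)
  exact map_normalizedBlockSum T x dyadicBlock m ▸ hwK m

end Hilbert

theorem null_along_orthonormal_of_relCompact_on_bases_general
    {H : Type*} [NormedAddCommGroup H] [InnerProductSpace ℝ H] [CompleteSpace H]
    {F : Type*} [AddCommGroup F] [Module ℝ F] [UniformSpace F] [IsUniformAddGroup F]
    [ContinuousSMul ℝ F] [LocallyConvexSpace ℝ F]
    [FirstCountableTopology F] [T2Space F]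
    (T : H →L[ℝ] F)
    (hbases : ∀ S : Set H, Orthonormal ℝ ((↑) : S → H) →
      (Submodule.span ℝ S).topologicalClosure = ⊤ →
      IsCompact (closure (T '' S))) :
    ∀ x : ℕ → H, Orthonormal ℝ x →
      Filter.Tendsto (fun n => T (x n)) Filter.atTop (nhds 0) := by
  intro x hx
  obtain ⟨K, hK, hxK⟩ := exists_isCompact_forall_mem_of_orthonormal T hbases hx
  refine hK.tendsto_nhds_of_unique_mapClusterPt (.of_forall hxK) fun z _ hz => ?_
  obtain ⟨ψ, hψ, hψz⟩ := hz.tendsto_subseq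
  exact eq_zero_of_tendsto_orthonormal T hbases (hx.comp ψ hψ.injective) hψz

/-- If a continuous linear map `T` from an infinite-dimensional real
Hilbert space to a real Fréchet space maps every maximal orthonormal set (orthonormal
set whose closed linear span is all of `H`) into a relatively compact set, then `T`
maps every orthonormal sequence to a null sequence in `F`. -/
theorem null_along_orthonormal_of_relCompact_on_bases
    {H : Type*} [NormedAddCommGroup H] [InnerProductSpace ℝ H] [CompleteSpace H]
    (hH : ¬ FiniteDimensional ℝ H)
    {F : Type*} [AddCommGroup F] [Module ℝ F] [UniformSpace F] [IsUniformAddGroup F]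
    [ContinuousSMul ℝ F] [LocallyConvexSpace ℝ F]
    [FirstCountableTopology F] [T2Space F] [CompleteSpace F]
    (T : H →L[ℝ] F)
    (hbases : ∀ S : Set H, Orthonormal ℝ ((↑) : S → H) →
      (Submodule.span ℝ S).topologicalClosure = ⊤ →
      IsCompact (closure (T '' S))) :
    ∀ x : ℕ → H, Orthonormal ℝ x →
      Filter.Tendsto (fun n => T (x n)) Filter.atTop (nhds 0) :=
  null_along_orthonormal_of_relCompact_on_bases_general T hbases
end

section
/- Let H be an infinite-dimensional real Hilbert space and X a real Banach space. A linear map T : H → X is bounded (there exists M with ‖Tx‖ ≤ M‖x‖ for all x) if and only if T is bounded along orthonormal sequences, i.e., sup_n ‖T x_n‖ < ∞ for every orthonormal sequence (x_n) in H. -/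
/-!
If `T` is unbounded, it stays unbounded on the orthogonal complement of any finite-dimensional
subspace `K`, since `T` is automatically bounded on `K` and `x = P_K x + (x - P_K x)`. Hence one
can choose, inductively, unit vectors orthogonal to all previously chosen ones on which `‖T ·‖`
exceeds every earlier value by `1`; they form an orthonormal sequence along which `T` is unbounded.
-/

open scoped RealInnerProductSpace

namespace LinearMap

variable {H : Type*} [NormedAddCommGroup H] [InnerProductSpace ℝ H]
  {X : Type*} [NormedAddCommGroup X] [NormedSpace ℝ X]

theorem exists_bound_of_bound_on_orthogonal (T : H →ₗ[ℝ] X) (K : Submodule ℝ H)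
    [FiniteDimensional ℝ K] {C : ℝ} (hC : ∀ z ∈ Kᗮ, ‖T z‖ ≤ C * ‖z‖) :
    ∃ M, ∀ x, ‖T x‖ ≤ M * ‖x‖ := by
  let g : K →L[ℝ] X := (T.domRestrict K).toContinuousLinearMap
  refine ⟨‖g‖ + |C|, fun x => ?_⟩
  have hK : ‖T (K.starProjection x)‖ ≤ ‖g‖ * ‖x‖ :=
    calc ‖T (K.starProjection x)‖ = ‖g (K.orthogonalProjectionOnto x)‖ := rfl
      _ ≤ ‖g‖ * ‖K.orthogonalProjectionOnto x‖ := g.le_opNorm _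
      _ ≤ ‖g‖ * ‖x‖ := by gcongr; exact K.norm_orthogonalProjectionOnto_apply_le x
  have hKperp : ‖T (x - K.starProjection x)‖ ≤ |C| * ‖x‖ :=
    calc ‖T (x - K.starProjection x)‖ ≤ C * ‖x - K.starProjection x‖ :=
          hC _ (K.sub_starProjection_mem_orthogonal x)
      _ ≤ |C| * ‖x - K.starProjection x‖ := by gcongr; exact le_abs_self C
      _ ≤ |C| * ‖x‖ := by
          gcongr
          simpa using Kᗮ.norm_starProjection_apply_le x
  calc ‖T x‖ = ‖T (K.starProjection x) + T (x - K.starProjection x)‖ := by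
        rw [← map_add, add_sub_cancel]
    _ ≤ ‖g‖ * ‖x‖ + |C| * ‖x‖ := (norm_add_le _ _).trans (add_le_add hK hKperp)
    _ = (‖g‖ + |C|) * ‖x‖ := by ring

theorem exists_unit_mem_orthogonal_lt_norm (T : H →ₗ[ℝ] X)
    (hT : ¬ ∃ M, ∀ x, ‖T x‖ ≤ M * ‖x‖) (K : Submodule ℝ H) [FiniteDimensional ℝ K] (C : ℝ) :
    ∃ y ∈ Kᗮ, ‖y‖ = 1 ∧ C < ‖T y‖ := by
  obtain ⟨z, hzK, hz⟩ : ∃ z ∈ Kᗮ, C * ‖z‖ < ‖T z‖ := by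
    by_contra! h
    exact hT (T.exists_bound_of_bound_on_orthogonal K h)
  have hz0 : 0 < ‖z‖ := norm_pos_iff.mpr (by rintro rfl; simp at hz)
  refine ⟨‖z‖⁻¹ • z, Kᗮ.smul_mem _ hzK, by simp [norm_smul, hz0.ne'], ?_⟩
  rw [map_smul, norm_smul, norm_inv, norm_norm, inv_mul_eq_div, lt_div_iff₀ hz0]
  exact hz

theorem exists_orthonormal_natCast_le_norm (T : H →ₗ[ℝ] X)
    (hT : ¬ ∃ M, ∀ x, ‖T x‖ ≤ M * ‖x‖) :
    ∃ x : ℕ → H, Orthonormal ℝ x ∧ ∀ n : ℕ, (n : ℝ) ≤ ‖T (x n)‖ := by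
  obtain ⟨x, hx_norm, hx_rel⟩ := exists_seq_of_forall_finset_exists (fun y : H => ‖y‖ = 1)
    (fun u v => ⟪u, v⟫ = 0 ∧ ‖T u‖ + 1 ≤ ‖T v‖) fun s _ => by
      obtain ⟨y, hyK, hy, hTy⟩ := T.exists_unit_mem_orthogonal_lt_norm hT
        (Submodule.span ℝ s) (∑ u ∈ s, ‖T u‖ + 1)
      refine ⟨y, hy, fun u hu => ⟨hyK u (Submodule.subset_span hu), ?_⟩⟩
      have : ‖T u‖ ≤ ∑ u ∈ s, ‖T u‖ := Finset.single_le_sum (fun _ _ => norm_nonneg _) hu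
      linarith
  refine ⟨x, ⟨hx_norm, fun m n hmn => ?_⟩, fun n => ?_⟩
  · rcases hmn.lt_or_gt with h | h
    · exact (hx_rel m n h).1
    · rw [real_inner_comm]; exact (hx_rel n m h).1
  · induction n with
    | zero => simp
    | succ n ih =>
      push_cast
      linarith [(hx_rel n (n + 1) n.lt_succ_self).2]

end LinearMap

theorem bounded_iff_bounded_along_orthonormal_general
    {H : Type*} [NormedAddCommGroup H] [InnerProductSpace ℝ H]
    {X : Type*} [NormedAddCommGroup X] [NormedSpace ℝ X]
    (T : H →ₗ[ℝ] X) :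
    (∃ M : ℝ, ∀ x : H, ‖T x‖ ≤ M * ‖x‖) ↔
      ∀ x : ℕ → H, Orthonormal ℝ x → ∃ M : ℝ, ∀ n : ℕ, ‖T (x n)‖ ≤ M := by
  refine ⟨fun ⟨M, hM⟩ x hx => ⟨M, fun n => by simpa [hx.1 n] using hM (x n)⟩, fun h => ?_⟩
  by_contra hT
  obtain ⟨x, hx, hTx⟩ := T.exists_orthonormal_natCast_le_norm hT
  obtain ⟨M, hM⟩ := h x hx
  obtain ⟨n, hn⟩ := exists_nat_gt M
  exact (hn.trans_le (hTx n)).not_ge (hM n)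

/-- A linear map from an infinite-dimensional real Hilbert space to a
real Banach space is bounded iff it is bounded along orthonormal sequences. -/
theorem bounded_iff_bounded_along_orthonormal
    {H : Type*} [NormedAddCommGroup H] [InnerProductSpace ℝ H] [CompleteSpace H]
    (hH : ¬ FiniteDimensional ℝ H)
    {X : Type*} [NormedAddCommGroup X] [NormedSpace ℝ X] [CompleteSpace X]
    (T : H →ₗ[ℝ] X) :
    (∃ M : ℝ, ∀ x : H, ‖T x‖ ≤ M * ‖x‖) ↔
      ∀ x : ℕ → H, Orthonormal ℝ x → ∃ M : ℝ, ∀ n : ℕ, ‖T (x n)‖ ≤ M :=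
  bounded_iff_bounded_along_orthonormal_general T
end

section
/- Let H be a real Hilbert space and let (z_n) be a sequence in H converging weakly to 0 such that ‖z_n‖ ≥ C > 0 for all n and |⟨z_n, z_m⟩| → 0 as n ≠ m and n, m → ∞ (for every ε > 0 there is N with |⟨z_n, z_m⟩| < ε whenever n ≠ m and n, m ≥ N). Then there exist a strictly increasing sequence of indices (n_i) and a pairwise orthogonal sequence (x_i) in H such that ‖x_i − z_{n_i}‖ → 0 as i → ∞. -/
/-!
Orthogonalize along a sparse subsequence, Gram–Schmidt style without normalization: replace
`z (ψ (i + 1))` by its component orthogonal to the span of `z 0, …, z (ψ i)`. Because `z` is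
weakly null, its projection onto any fixed finite-dimensional subspace tends to `0`, so each
`ψ (i + 1)` can be chosen so large that the correction is below `1 / (ψ i + 1)`.
-/

open scoped RealInnerProductSpace

open Filter Topology

theorem Filter.exists_strictMono_forall_of_eventually_atTop {P : ℕ → ℕ → Prop}
    (h : ∀ k, ∀ᶠ n in atTop, P k n) : ∃ ψ : ℕ → ℕ, StrictMono ψ ∧ ∀ i, P (ψ i) (ψ (i + 1)) := by
  choose f hf using fun k => ((eventually_gt_atTop k).and (h k)).exists
  let ψ : ℕ → ℕ := fun i => Nat.rec 0 (fun _ prev => f prev) i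
  exact ⟨ψ, strictMono_nat_of_lt_succ fun i => (hf (ψ i)).1, fun i => (hf (ψ i)).2⟩

section

variable {H : Type*} [NormedAddCommGroup H] [InnerProductSpace ℝ H]

theorem Submodule.tendsto_starProjection_of_tendsto_inner {ι : Type*} {l : Filter ι}
    {z : ι → H} (hw : ∀ y : H, Tendsto (fun n => ⟪z n, y⟫) l (𝓝 0))
    (K : Submodule ℝ H) [FiniteDimensional ℝ K] :
    Tendsto (fun n => K.starProjection (z n)) l (𝓝 0) := by
  let b := stdOrthonormalBasis ℝ K
  have hsum : ∀ n, K.starProjection (z n) = ∑ i, ⟪(b i : H), z n⟫ • (b i : H) := fun n => by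
    simp [K.starProjection_apply, b.orthogonalProjectionOnto_apply_eq_sum]
  simp only [hsum]
  simpa using tendsto_finsetSum _ fun i _ =>
    ((hw (b i)).congr fun n => real_inner_comm _ _).smul_const (b i : H)

theorem inner_sub_starProjection_eq_zero_of_monotone {V : ℕ → Submodule ℝ H}
    [∀ k, (V k).HasOrthogonalProjection] (hV : Monotone V) {y : ℕ → H}
    (hy : ∀ i, y i ∈ V (i + 1)) {i j : ℕ} (hij : i ≠ j) :
    ⟪y i - (V i).starProjection (y i), y j - (V j).starProjection (y j)⟫ = 0 := by
  have of_lt : ∀ {i j : ℕ}, i < j →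
      ⟪y i - (V i).starProjection (y i), y j - (V j).starProjection (y j)⟫ = 0 := by
    intro i j hij
    have hmem : y i - (V i).starProjection (y i) ∈ V j :=
      hV hij (sub_mem (hy i) (hV i.le_succ ((V i).starProjection_apply_mem _)))
    exact (V j).inner_right_of_mem_orthogonal hmem ((V j).sub_starProjection_mem_orthogonal _)
  rcases hij.lt_or_gt with h | h
  · exact of_lt h
  · rw [real_inner_comm]
    exact of_lt h

def initialSpan (z : ℕ → H) (k : ℕ) : Submodule ℝ H :=
  Submodule.span ℝ (z '' Set.Iic k)

instance (z : ℕ → H) (k : ℕ) : FiniteDimensional ℝ (initialSpan z k) :=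
  FiniteDimensional.span_of_finite ℝ ((Set.finite_Iic k).image z)

theorem monotone_initialSpan (z : ℕ → H) : Monotone (initialSpan z) := fun _ _ h =>
  Submodule.span_mono (Set.image_mono (Set.Iic_subset_Iic.mpr h))

theorem mem_initialSpan (z : ℕ → H) {m k : ℕ} (h : m ≤ k) : z m ∈ initialSpan z k :=
  Submodule.subset_span ⟨m, h, rfl⟩

end

theorem orthogonal_approximation_of_weakly_null_general
    {H : Type*} [NormedAddCommGroup H] [InnerProductSpace ℝ H]
    (z : ℕ → H)
    (hw : ∀ y : H, Filter.Tendsto (fun n => ⟪z n, y⟫) Filter.atTop (nhds 0)) :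
    ∃ (φ : ℕ → ℕ) (x : ℕ → H), StrictMono φ ∧
      (∀ i j : ℕ, i ≠ j → ⟪x i, x j⟫ = 0) ∧
      Filter.Tendsto (fun i => ‖x i - z (φ i)‖) Filter.atTop (nhds 0) := by
  obtain ⟨ψ, hψ, hsmall⟩ := exists_strictMono_forall_of_eventually_atTop fun k =>
    (tendsto_zero_iff_norm_tendsto_zero.mp
      ((initialSpan z k).tendsto_starProjection_of_tendsto_inner hw)).eventually
        (gt_mem_nhds (Nat.one_div_pos_of_nat (n := k)))
  refine ⟨fun i => ψ (i + 1),
    fun i => z (ψ (i + 1)) - (initialSpan z (ψ i)).starProjection (z (ψ (i + 1))),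
    fun _ _ h => hψ (Nat.succ_lt_succ h), fun i j hij => ?_, ?_⟩
  · exact inner_sub_starProjection_eq_zero_of_monotone (V := fun i => initialSpan z (ψ i))
      ((monotone_initialSpan z).comp hψ.monotone) (fun i => mem_initialSpan z le_rfl) hij
  · refine squeeze_zero (fun _ => norm_nonneg _) (fun i => ?_)
      (tendsto_one_div_add_atTop_nhds_zero_nat.comp hψ.tendsto_atTop)
    simpa using (hsmall i).le

/-- A weakly null sequence `(zₙ)` in a real Hilbert space with norms
bounded below by `C > 0` and vanishing off-diagonal inner products admits indices
`n₁ < n₂ < ⋯` and a pairwise orthogonal sequence `(xᵢ)` with `‖xᵢ − z_{nᵢ}‖ → 0`. -/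
theorem orthogonal_approximation_of_weakly_null
    {H : Type*} [NormedAddCommGroup H] [InnerProductSpace ℝ H] [CompleteSpace H]
    (z : ℕ → H) (C : ℝ) (hC : 0 < C) (hnorm : ∀ n : ℕ, C ≤ ‖z n‖)
    (hw : ∀ y : H, Filter.Tendsto (fun n => ⟪z n, y⟫) Filter.atTop (nhds 0))
    (hoff : ∀ ε > 0, ∃ N : ℕ, ∀ n m : ℕ, n ≠ m → N ≤ n → N ≤ m → |⟪z n, z m⟫| < ε) :
    ∃ (φ : ℕ → ℕ) (x : ℕ → H), StrictMono φ ∧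
      (∀ i j : ℕ, i ≠ j → ⟪x i, x j⟫ = 0) ∧
      Filter.Tendsto (fun i => ‖x i - z (φ i)‖) Filter.atTop (nhds 0) :=
  orthogonal_approximation_of_weakly_null_general z hw
end

section
/- Let E be a real Banach lattice, F a real Fréchet space (a complete metrizable locally convex topological vector space over ℝ), and 𝒯 a set of linear maps from E to F each of which maps the closed unit ball B_E to a von Neumann bounded subset of F. If the set {T x : T ∈ 𝒯, x ∈ D} is relatively compact in F for every pairwise disjoint set D of norm-one positive elements of E, then the set {T x : T ∈ 𝒯, x ∈ D} is relatively compact in F for every pairwise disjoint norm-bounded subset D of E. -/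
/-!
Split every `x ∈ D` into its positive and negative parts and normalize the nonzero ones. The
normalized parts form a pairwise disjoint set of positive norm-one vectors, so by hypothesis the
closure `K` of their image under `𝒯` is compact. Since `T x = ‖x⁺‖ • T u - ‖x⁻‖ • T v` with
`u, v` normalized parts and `‖x^±‖ ≤ C`, the image of `D` lies in the compact set `S - S`,
where `S = [0, C] • ({0} ∪ K)`.
-/

open Filter Topology Pointwise

section LatticeOrderedGroup

variable {E : Type*} [AddCommGroup E] [Lattice E]

theorem inf_eq_zero_of_le_abs {u v x y : E} (hu : 0 ≤ u) (hv : 0 ≤ v) (hux : u ≤ |x|)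
    (hvy : v ≤ |y|) (hxy : |x| ⊓ |y| = 0) : u ⊓ v = 0 :=
  le_antisymm (hxy ▸ inf_le_inf hux hvy) (le_inf hu hv)

theorem nonneg_of_mem_posPart_image_union_negPart_image {D : Set E} :
    ∀ u ∈ posPart '' D ∪ negPart '' D, 0 ≤ u := by
  rintro _ (⟨x, -, rfl⟩ | ⟨x, -, rfl⟩)
  exacts [posPart_nonneg x, negPart_nonneg x]

variable [IsOrderedAddMonoid E]

theorem posPart_le_abs (x : E) : x⁺ ≤ |x| :=
  sup_le (le_abs_self x) (abs_nonneg x)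

theorem negPart_le_abs (x : E) : x⁻ ≤ |x| :=
  sup_le (neg_le_abs x) (abs_nonneg x)

theorem Set.Pairwise.posPart_image_union_negPart_image {D : Set E}
    (hD : D.Pairwise fun x y => |x| ⊓ |y| = 0) :
    (posPart '' D ∪ negPart '' D).Pairwise fun u v => u ⊓ v = 0 := by
  have hpart : ∀ u ∈ posPart '' D ∪ negPart '' D, ∃ x ∈ D, (u = x⁺ ∨ u = x⁻) ∧ u ≤ |x| := by
    rintro u (⟨x, hx, rfl⟩ | ⟨x, hx, rfl⟩)
    · exact ⟨x, hx, .inl rfl, posPart_le_abs x⟩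
    · exact ⟨x, hx, .inr rfl, negPart_le_abs x⟩
  intro u hu v hv huv
  obtain ⟨x, hx, hux, hu_le⟩ := hpart u hu
  obtain ⟨y, hy, hvy, hv_le⟩ := hpart v hv
  by_cases hxy : x = y
  · subst hxy
    rcases hux with rfl | rfl <;> rcases hvy with rfl | rfl
    · exact absurd rfl huv
    · exact posPart_inf_negPart_eq_zero x
    · exact inf_comm x⁺ x⁻ ▸ posPart_inf_negPart_eq_zero x
    · exact absurd rfl huv
  · exact inf_eq_zero_of_le_abs (nonneg_of_mem_posPart_image_union_negPart_image u hu)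
      (nonneg_of_mem_posPart_image_union_negPart_image v hv) hu_le hv_le (hD hx hy hxy)

theorem nonneg_of_two_pow_nsmul_nonneg (k : ℕ) {y : E} (h : 0 ≤ 2 ^ k • y) : 0 ≤ y := by
  induction k generalizing y with
  | zero => simpa using h
  | succ k ih =>
    refine nsmul_two_semiclosed (ih ?_)
    rwa [← mul_nsmul, ← pow_succ']

variable [Module ℝ E]

/-- The positive cone is closed under multiplication by positive dyadic rationals, hence, being
closed, under multiplication by all positive reals. -/
theorem posSMulMono_of_orderClosedTopology [TopologicalSpace E] [OrderClosedTopology E]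
    [ContinuousSMul ℝ E] : PosSMulMono ℝ E := by
  refine PosSMulMono.of_smul_nonneg fun c hc x hx => ?_
  have hdyadic : ∀ k : ℕ, 0 ≤ ((⌊c * 2 ^ k⌋₊ : ℝ) / 2 ^ k) • x := fun k => by
    refine nonneg_of_two_pow_nsmul_nonneg k ?_
    rw [← Nat.cast_smul_eq_nsmul ℝ, smul_smul, Nat.cast_pow, Nat.cast_ofNat,
      mul_div_cancel₀ _ (by positivity), Nat.cast_smul_eq_nsmul]
    exact nsmul_nonneg hx _
  have hlim : Tendsto (fun k : ℕ => ((⌊c * 2 ^ k⌋₊ : ℝ) / 2 ^ k) • x) atTop (𝓝 (c • x)) :=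
    ((tendsto_nat_floor_mul_div_atTop hc).comp
      (tendsto_pow_atTop_atTop_of_one_lt one_lt_two)).smul_const x
  exact ge_of_tendsto' hlim hdyadic

theorem smul_inf_smul_eq_zero [PosSMulMono ℝ E] {u v : E} (hu : 0 ≤ u) (hv : 0 ≤ v)
    (huv : u ⊓ v = 0) {a b : ℝ} (ha : 0 ≤ a) (hb : 0 ≤ b) : (a • u) ⊓ (b • v) = 0 := by
  have hc : 0 < a + b + 1 := by linarith
  refine le_antisymm ?_ (le_inf (smul_nonneg ha hu) (smul_nonneg hb hv))
  calc (a • u) ⊓ (b • v) ≤ ((a + b + 1) • u) ⊓ ((a + b + 1) • v) :=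
        inf_le_inf (smul_le_smul_of_nonneg_right (by linarith) hu)
          (smul_le_smul_of_nonneg_right (by linarith) hv)
    _ = (a + b + 1) • (u ⊓ v) := ((OrderIso.smulRight hc).map_inf u v).symm
    _ = 0 := by rw [huv, smul_zero]

end LatticeOrderedGroup

section NormedLattice

variable {E : Type*} [NormedAddCommGroup E] [Lattice E] [NormedSpace ℝ E]

def normalizedParts (D : Set E) : Set E :=
  (fun p => ‖p‖⁻¹ • p) '' ((posPart '' D ∪ negPart '' D) \ {0})

theorem mem_normalizedParts_of_posPart {D : Set E} {x : E} (hx : x ∈ D) (h : x⁺ ≠ 0) :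
    ‖x⁺‖⁻¹ • x⁺ ∈ normalizedParts D :=
  ⟨x⁺, ⟨.inl ⟨x, hx, rfl⟩, h⟩, rfl⟩

theorem mem_normalizedParts_of_negPart {D : Set E} {x : E} (hx : x ∈ D) (h : x⁻ ≠ 0) :
    ‖x⁻‖⁻¹ • x⁻ ∈ normalizedParts D :=
  ⟨x⁻, ⟨.inr ⟨x, hx, rfl⟩, h⟩, rfl⟩

variable [PosSMulMono ℝ E]

theorem nonneg_and_norm_eq_one_of_mem_normalizedParts {D : Set E} :
    ∀ u ∈ normalizedParts D, 0 ≤ u ∧ ‖u‖ = 1 := by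
  rintro _ ⟨p, ⟨hp, hp0⟩, rfl⟩
  exact ⟨smul_nonneg (by positivity) (nonneg_of_mem_posPart_image_union_negPart_image p hp),
    norm_smul_inv_norm hp0⟩

variable [IsOrderedAddMonoid E]

theorem Set.Pairwise.normalizedParts {D : Set E} (hD : D.Pairwise fun x y => |x| ⊓ |y| = 0) :
    (normalizedParts D).Pairwise fun u v => |u| ⊓ |v| = 0 := by
  rintro _ ⟨p, ⟨hp, -⟩, rfl⟩ _ ⟨q, ⟨hq, -⟩, rfl⟩ hpq
  have hp0 := nonneg_of_mem_posPart_image_union_negPart_image p hp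
  have hq0 := nonneg_of_mem_posPart_image_union_negPart_image q hq
  rw [abs_of_nonneg (smul_nonneg (by positivity) hp0),
    abs_of_nonneg (smul_nonneg (by positivity) hq0)]
  exact smul_inf_smul_eq_zero hp0 hq0
    (hD.posPart_image_union_negPart_image hp hq fun h => hpq (h ▸ rfl))
    (by positivity) (by positivity)

end NormedLattice

section SolidNorm

variable {E : Type*} [NormedAddCommGroup E] [Lattice E] [IsOrderedAddMonoid E] [HasSolidNorm E]

theorem norm_posPart_le (x : E) : ‖x⁺‖ ≤ ‖x‖ :=
  norm_le_norm_of_abs_le_abs <| (abs_of_nonneg (posPart_nonneg x)).symm ▸ posPart_le_abs x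

theorem norm_negPart_le (x : E) : ‖x⁻‖ ≤ ‖x‖ :=
  norm_le_norm_of_abs_le_abs <| (abs_of_nonneg (negPart_nonneg x)).symm ▸ negPart_le_abs x

end SolidNorm

theorem LinearMap.map_mem_Icc_smul_insert_zero {E F : Type*} [NormedAddCommGroup E]
    [NormedSpace ℝ E] [AddCommGroup F] [Module ℝ F] (T : E →ₗ[ℝ] F) {p : E} {C : ℝ}
    (hp : ‖p‖ ≤ C) {S : Set F} (hS : p ≠ 0 → T (‖p‖⁻¹ • p) ∈ S) :
    T p ∈ Set.Icc 0 C • insert 0 S := by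
  by_cases hp0 : p = 0
  · exact ⟨0, ⟨le_rfl, (norm_nonneg p).trans hp⟩, 0, Set.mem_insert 0 S, by simp [hp0]⟩
  · refine ⟨‖p‖, ⟨norm_nonneg p, hp⟩, _, Set.mem_insert_of_mem 0 (hS hp0), ?_⟩
    change ‖p‖ • T (‖p‖⁻¹ • p) = T p
    rw [← map_smul, smul_inv_smul₀ (norm_ne_zero_iff.mpr hp0)]

theorem relCompact_on_disjoint_bounded_of_relCompact_on_disjoint_normalized_positive_general
    {E : Type*} [NormedAddCommGroup E] [Lattice E] [HasSolidNorm E]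
      [IsOrderedAddMonoid E] [NormedSpace ℝ E]
    {F : Type*} [AddCommGroup F] [Module ℝ F] [UniformSpace F] [IsUniformAddGroup F]
    [ContinuousSMul ℝ F] [T2Space F]
    (𝒯 : Set (E →ₗ[ℝ] F))
    (hpos : ∀ D : Set E, (∀ x ∈ D, 0 ≤ x ∧ ‖x‖ = 1) →
      (D.Pairwise fun x y => |x| ⊓ |y| = 0) →
      IsCompact (closure {z : F | ∃ T ∈ 𝒯, ∃ x ∈ D, z = T x})) :
    ∀ D : Set E, (D.Pairwise fun x y => |x| ⊓ |y| = 0) →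
      (∃ C : ℝ, ∀ x ∈ D, ‖x‖ ≤ C) →
      IsCompact (closure {z : F | ∃ T ∈ 𝒯, ∃ x ∈ D, z = T x}) := by
  intro D hD ⟨C, hC⟩
  have : PosSMulMono ℝ E := posSMulMono_of_orderClosedTopology
  set K := closure {z : F | ∃ T ∈ 𝒯, ∃ x ∈ normalizedParts D, z = T x}
  have hK : IsCompact K :=
    hpos _ nonneg_and_norm_eq_one_of_mem_normalizedParts hD.normalizedParts
  set S := Set.Icc 0 C • insert 0 K
  have hS : IsCompact S := isCompact_Icc.smul_set (hK.insert 0)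
  have hSS : IsCompact (S - S) := by
    rw [sub_eq_add_neg]
    exact hS.add hS.neg
  refine hSS.of_isClosed_subset isClosed_closure (closure_minimal ?_ hSS.isClosed)
  rintro _ ⟨T, hT, x, hx, rfl⟩
  rw [← posPart_sub_negPart x, map_sub]
  exact Set.sub_mem_sub
    (T.map_mem_Icc_smul_insert_zero ((norm_posPart_le x).trans (hC x hx))
      fun h => subset_closure ⟨T, hT, _, mem_normalizedParts_of_posPart hx h, rfl⟩)
    (T.map_mem_Icc_smul_insert_zero ((norm_negPart_le x).trans (hC x hx))
      fun h => subset_closure ⟨T, hT, _, mem_normalizedParts_of_negPart hx h, rfl⟩)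

/-- For a set `𝒯` of topologically bounded linear maps from a real Banach
lattice `E` to a real Fréchet space `F`: if `{T x : T ∈ 𝒯, x ∈ D}` is relatively compact
for every pairwise disjoint set `D` of norm-one positive elements, then it is relatively
compact for every pairwise disjoint norm-bounded subset `D` of `E`. -/
theorem relCompact_on_disjoint_bounded_of_relCompact_on_disjoint_normalized_positive
    {E : Type*} [NormedAddCommGroup E] [Lattice E] [HasSolidNorm E]
      [IsOrderedAddMonoid E] [NormedSpace ℝ E] [CompleteSpace E]
    {F : Type*} [AddCommGroup F] [Module ℝ F] [UniformSpace F] [IsUniformAddGroup F]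
    [ContinuousSMul ℝ F] [LocallyConvexSpace ℝ F]
    [FirstCountableTopology F] [T2Space F] [CompleteSpace F]
    (𝒯 : Set (E →ₗ[ℝ] F))
    (hbdd : ∀ T ∈ 𝒯, Bornology.IsVonNBounded ℝ (T '' Metric.closedBall (0 : E) 1))
    (hpos : ∀ D : Set E, (∀ x ∈ D, 0 ≤ x ∧ ‖x‖ = 1) →
      (D.Pairwise fun x y => |x| ⊓ |y| = 0) →
      IsCompact (closure {z : F | ∃ T ∈ 𝒯, ∃ x ∈ D, z = T x})) :
    ∀ D : Set E, (D.Pairwise fun x y => |x| ⊓ |y| = 0) →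
      (∃ C : ℝ, ∀ x ∈ D, ‖x‖ ≤ C) →
      IsCompact (closure {z : F | ∃ T ∈ 𝒯, ∃ x ∈ D, z = T x}) :=
  relCompact_on_disjoint_bounded_of_relCompact_on_disjoint_normalized_positive_general 𝒯 hpos
end

section
/- Let E be a real Banach lattice, F a real Fréchet space (a complete metrizable locally convex topological vector space over ℝ), and 𝒯 a set of linear maps from E to F each of which maps the closed unit ball B_E to a von Neumann bounded subset of F. If for every pairwise disjoint norm-bounded sequence (x_n) of positive elements of E the set {T x_n : T ∈ 𝒯, n ∈ ℕ} is relatively compact in F, then the set {T x : T ∈ 𝒯, x ∈ D} is relatively compact in F for every pairwise disjoint set D of norm-one positive elements of E. -/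
/-!
A countable piece of a pairwise disjoint set of positive vectors, enumerated without repetitions
and padded with zeros, is a pairwise disjoint bounded sequence of positive vectors. Hence every
sequence `Tₙ xₙ` with `Tₙ ∈ 𝒯`, `xₙ ∈ D` lies in one of the compact sets provided by the
hypothesis and has a convergent, in particular Cauchy, subsequence. So `{T x : T ∈ 𝒯, x ∈ D}` is
totally bounded, and its closure is compact because `F` is complete.
-/

open Set Function

theorem totallyBounded_of_forall_cauchySeq_subseq {X : Type*} [UniformSpace X] {s : Set X}
    (h : ∀ u : ℕ → X, (∀ n, u n ∈ s) → ∃ φ : ℕ → ℕ, StrictMono φ ∧ CauchySeq (u ∘ φ)) :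
    TotallyBounded s := by
  intro V hV
  by_contra! hcover
  obtain ⟨u, hus, hu⟩ : ∃ u : ℕ → X, (∀ n, u n ∈ s) ∧ ∀ n, ∀ m < n, (u n, u m) ∉ V := by
    have : ∀ t : Set X, t.Finite → ∃ c ∈ s, ∀ y ∈ t, (c, y) ∉ V := fun t ht => by
      obtain ⟨c, hcs, hc⟩ := not_subset.1 (hcover t ht)
      exact ⟨c, hcs, fun y hy hcy => hc (mem_biUnion hy hcy)⟩
    obtain ⟨u, hu⟩ := seq_of_forall_finite_exists this
    exact ⟨u, fun n => (hu n).1, fun n m hmn => (hu n).2 _ ⟨m, hmn, rfl⟩⟩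
  obtain ⟨φ, hφ, hcauchy⟩ := h u hus
  obtain ⟨N, hN⟩ := hcauchy.mem_entourage hV
  exact hu _ _ (hφ N.lt_succ_self) (hN _ _ N.le_succ le_rfl)

theorem Set.Countable.exists_seq_pairwise {α : Type*} {r : α → α → Prop} {X : Set α} (a : α)
    (hX : X.Countable) (hr : X.Pairwise r) (ha : ∀ x ∈ insert a X, r a x ∧ r x a) :
    ∃ e : ℕ → α, X ⊆ range e ∧ (∀ n, e n ∈ insert a X) ∧ Pairwise (r on e) := by
  have := hX.toEncodable
  let e : ℕ → α := fun n => ((Encodable.decode₂ X n).map Subtype.val).getD a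
  have he : ∀ n, e n = a ∨ ∃ x : X, Encodable.encode x = n ∧ e n = x := fun n => by
    cases h : Encodable.decode₂ X n with
    | none => simp [e, h]
    | some x => exact .inr ⟨x, Encodable.mem_decode₂.1 h, by simp [e, h]⟩
  have he_mem : ∀ n, e n ∈ insert a X := fun n => by
    rcases he n with h | ⟨x, -, h⟩ <;> simp [h]
  refine ⟨e, fun x hx => ⟨Encodable.encode (⟨x, hx⟩ : X), by simp [e]⟩,
    he_mem, fun n m hnm => ?_⟩
  rcases he n with hn | ⟨x, rfl, hn⟩
  · rw [onFun, hn]; exact (ha _ (he_mem m)).1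
  rcases he m with hm | ⟨y, rfl, hm⟩
  · rw [onFun, hm]; exact (ha _ (he_mem _)).2
  rw [onFun, hn, hm]
  exact hr x.2 y.2 (Subtype.val_injective.ne fun hxy => hnm (by rw [hxy]))

theorem relCompact_on_disjoint_normalized_positive_of_relCompact_on_disjoint_positive_seq_general
    {E : Type*} [NormedAddCommGroup E] [Lattice E] [IsOrderedAddMonoid E] [NormedSpace ℝ E]
    {F : Type*} [AddCommGroup F] [Module ℝ F] [UniformSpace F]
    [FirstCountableTopology F] [CompleteSpace F]
    (𝒯 : Set (E →ₗ[ℝ] F))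
    (hseq : ∀ x : ℕ → E, (∀ n, 0 ≤ x n) →
      (∀ n m, n ≠ m → |x n| ⊓ |x m| = 0) → (∃ C : ℝ, ∀ n, ‖x n‖ ≤ C) →
      IsCompact (closure {z : F | ∃ T ∈ 𝒯, ∃ n : ℕ, z = T (x n)})) :
    ∀ D : Set E, (∀ x ∈ D, 0 ≤ x ∧ ‖x‖ = 1) →
      (D.Pairwise fun x y => |x| ⊓ |y| = 0) →
      IsCompact (closure {z : F | ∃ T ∈ 𝒯, ∃ x ∈ D, z = T x}) := by
  intro D hD hDdisj
  refine (TotallyBounded.closure ?_).isCompact_of_isClosed isClosed_closure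
  refine totallyBounded_of_forall_cauchySeq_subseq fun u hu => ?_
  choose T hT x hxD hux using hu
  have hxD' : range x ⊆ D := range_subset_iff.2 hxD
  have hzero : ∀ y ∈ insert 0 (range x), |0| ⊓ |y| = 0 ∧ |y| ⊓ |0| = 0 := fun y _ => by
    simp [abs_nonneg]
  obtain ⟨e, hxe, he, hdisj⟩ :=
    (countable_range x).exists_seq_pairwise 0 (hDdisj.mono hxD') hzero
  have he_nonneg_le_one : ∀ n, 0 ≤ e n ∧ ‖e n‖ ≤ 1 := fun n => by
    rcases he n with h | h
    · simp [h]
    · exact ⟨(hD _ (hxD' h)).1, (hD _ (hxD' h)).2.le⟩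
  have hK := hseq e (fun n => (he_nonneg_le_one n).1) @hdisj ⟨1, fun n => (he_nonneg_le_one n).2⟩
  have hu_mem : ∀ n, u n ∈ closure {z : F | ∃ T ∈ 𝒯, ∃ k : ℕ, z = T (e k)} := fun n => by
    obtain ⟨k, hk⟩ := hxe (mem_range_self n)
    exact subset_closure ⟨T n, hT n, k, hk ▸ hux n⟩
  obtain ⟨_, -, φ, hφ, hlim⟩ := hK.isSeqCompact hu_mem
  exact ⟨φ, hφ, hlim.cauchySeq⟩

/-- For a set `𝒯` of topologically bounded linear maps from a real Banach
lattice `E` to a real Fréchet space `F`: if `{T xₙ : T ∈ 𝒯, n ∈ ℕ}` is relatively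
compact for every pairwise disjoint norm-bounded sequence `(xₙ)` of positive elements,
then `{T x : T ∈ 𝒯, x ∈ D}` is relatively compact for every pairwise disjoint set `D`
of norm-one positive elements. -/
theorem relCompact_on_disjoint_normalized_positive_of_relCompact_on_disjoint_positive_seq
    {E : Type*} [NormedAddCommGroup E] [Lattice E] [HasSolidNorm E] [IsOrderedAddMonoid E] [NormedSpace ℝ E] [CompleteSpace E]
    {F : Type*} [AddCommGroup F] [Module ℝ F] [UniformSpace F] [IsUniformAddGroup F]
    [ContinuousSMul ℝ F] [LocallyConvexSpace ℝ F]
    [FirstCountableTopology F] [T2Space F] [CompleteSpace F]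
    (𝒯 : Set (E →ₗ[ℝ] F))
    (hbdd : ∀ T ∈ 𝒯, Bornology.IsVonNBounded ℝ (T '' Metric.closedBall (0 : E) 1))
    (hseq : ∀ x : ℕ → E, (∀ n, 0 ≤ x n) →
      (∀ n m, n ≠ m → |x n| ⊓ |x m| = 0) → (∃ C : ℝ, ∀ n, ‖x n‖ ≤ C) →
      IsCompact (closure {z : F | ∃ T ∈ 𝒯, ∃ n : ℕ, z = T (x n)})) :
    ∀ D : Set E, (∀ x ∈ D, 0 ≤ x ∧ ‖x‖ = 1) →
      (D.Pairwise fun x y => |x| ⊓ |y| = 0) →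
      IsCompact (closure {z : F | ∃ T ∈ 𝒯, ∃ x ∈ D, z = T x}) :=
  relCompact_on_disjoint_normalized_positive_of_relCompact_on_disjoint_positive_seq_general 𝒯 hseq
end

section
/- Let E be a real Banach lattice, F a real Fréchet space (a complete metrizable locally convex topological vector space over ℝ), and 𝒯 a set of linear maps from E to F each of which maps the closed unit ball B_E to a von Neumann bounded subset of F. Then the set {T x : T ∈ 𝒯, x ∈ D} is relatively compact in F for every pairwise disjoint norm-bounded subset D of E if and only if for every pairwise disjoint norm-bounded sequence (x_n) of positive elements of E the set {T x_n : T ∈ 𝒯, n ∈ ℕ} is relatively compact in F. -/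
/-!
Split every `a ∈ D` as `a = a⁺ - a⁻`: the positive parts of the elements of `D` are again
pairwise disjoint and bounded, and so are the negative parts, so a sequence `Tₖ aₖ` with `aₖ ∈ D`
lies in the difference `K₊ - K₋` of the two compact sets which the sequential hypothesis provides
for `(aₖ⁺)` and `(aₖ⁻)`. Once repeated terms are replaced by `0`, these sequences are pairwise
disjoint in the strict sense. As `F` is metrizable, a set all of whose sequences lie in
compact sets is relatively compact.
-/

open Filter Topology Uniformity

theorem isCompact_closure_of_forall_seq_subset_isCompact {X : Type*} [UniformSpace X]
    [(𝓤 X).IsCountablyGenerated] {s : Set X}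
    (h : ∀ w : ℕ → X, (∀ k, w k ∈ s) → ∃ K, IsCompact K ∧ ∀ k, w k ∈ K) :
    IsCompact (closure s) := by
  refine IsSeqCompact.isCompact fun z hz => ?_
  obtain ⟨V, hV⟩ := (𝓤 X).exists_antitone_basis
  have approx : ∀ k, ∃ w ∈ s, (z k, w) ∈ V k := fun k => by
    obtain ⟨w, hzw, hws⟩ :=
      mem_closure_iff_nhds.1 (hz k) _ (UniformSpace.ball_mem_nhds _ (hV.mem k))
    exact ⟨w, hws, hzw⟩
  choose w hws hzw using approx
  obtain ⟨K, hK, hwK⟩ := h w hws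
  obtain ⟨l, -, φ, hφ, hwl⟩ := hK.isSeqCompact hwK
  have hzw_close : Tendsto (fun k => (z (φ k), w (φ k))) atTop (𝓤 X) := by
    rw [hV.toHasBasis.tendsto_right_iff]
    refine fun i _ => (eventually_ge_atTop i).mono fun k hk => ?_
    exact hV.antitone (hk.trans hφ.le_apply) (hzw (φ k))
  have hzl : Tendsto (z ∘ φ) atTop (𝓝 l) :=
    hwl.congr_uniformity (tendsto_swap_uniformity.comp hzw_close)
  exact ⟨l, isClosed_closure.mem_of_tendsto hzl (.of_forall fun k => hz (φ k)), φ, hφ, hzl⟩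

section FirstOccurrences

variable {α : Type*} [Zero α] (x : ℕ → α)

open Classical in
noncomputable def firstOccurrences (n : ℕ) : α :=
  if ∃ j < n, x j = x n then 0 else x n

theorem firstOccurrences_eq_zero_or_eq (n : ℕ) :
    firstOccurrences x n = 0 ∨ firstOccurrences x n = x n := by
  unfold firstOccurrences
  split_ifs <;> simp

theorem exists_firstOccurrences_eq (k : ℕ) : ∃ n, firstOccurrences x n = x k := by
  classical
  have hk : ∃ n, x n = x k := ⟨k, rfl⟩
  refine ⟨Nat.find hk, ?_⟩
  rw [firstOccurrences, if_neg, Nat.find_spec hk]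
  rintro ⟨j, hj, hjx⟩
  exact Nat.find_min hk hj (hjx.trans (Nat.find_spec hk))

theorem firstOccurrences_eq_zero_of_eq {n m : ℕ} (hnm : n ≠ m)
    (h : firstOccurrences x n = firstOccurrences x m) : firstOccurrences x n = 0 := by
  unfold firstOccurrences at *
  rcases hnm.lt_or_gt with hlt | hlt <;> split_ifs at * with h₁ h₂ <;> grind

end FirstOccurrences

section LatticeOrderedGroup

variable {α : Type*} [Lattice α] [AddCommGroup α] [IsOrderedAddMonoid α]

theorem abs_inf_abs_eq_zero_of_abs_le {a b a' b' : α} (ha : |a'| ≤ |a|) (hb : |b'| ≤ |b|)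
    (h : |a| ⊓ |b| = 0) : |a'| ⊓ |b'| = 0 :=
  le_antisymm (h ▸ inf_le_inf ha hb) (le_inf (abs_nonneg _) (abs_nonneg _))

theorem abs_posPart_le_abs (a : α) : |a⁺| ≤ |a| := by
  rw [abs_of_nonneg (posPart_nonneg a), ← posPart_add_negPart]
  exact le_add_of_nonneg_right (negPart_nonneg a)

theorem abs_negPart_le_abs (a : α) : |a⁻| ≤ |a| := by
  rw [abs_of_nonneg (negPart_nonneg a), ← posPart_add_negPart]
  exact le_add_of_nonneg_left (posPart_nonneg a)

end LatticeOrderedGroup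

section NormedLattice

variable {E : Type*} [NormedAddCommGroup E] [Lattice E] [IsOrderedAddMonoid E]
    {R : Type*} [Semiring R] [Module R E] {F : Type*} [AddCommGroup F] [Module R F]
    [TopologicalSpace F]

theorem isCompact_closure_seq_of_disjoint_of_ne (𝒯 : Set (E →ₗ[R] F))
    (hseq : ∀ x : ℕ → E, (∀ n, 0 ≤ x n) →
        (∀ n m, n ≠ m → |x n| ⊓ |x m| = 0) → (∃ C : ℝ, ∀ n, ‖x n‖ ≤ C) →
        IsCompact (closure {z : F | ∃ T ∈ 𝒯, ∃ n : ℕ, z = T (x n)}))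
    (x : ℕ → E) (hpos : ∀ n, 0 ≤ x n) (hdisj : ∀ n m, x n ≠ x m → |x n| ⊓ |x m| = 0)
    (C : ℝ) (hC : ∀ n, ‖x n‖ ≤ C) :
    IsCompact (closure {z : F | ∃ T ∈ 𝒯, ∃ n : ℕ, z = T (x n)}) := by
  have hy_disj : ∀ n m, n ≠ m → |firstOccurrences x n| ⊓ |firstOccurrences x m| = 0 := by
    intro n m hnm
    by_cases hyy : firstOccurrences x n = firstOccurrences x m
    · simp [firstOccurrences_eq_zero_of_eq x hnm hyy]
    rcases firstOccurrences_eq_zero_or_eq x n with hn | hn <;>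
      rcases firstOccurrences_eq_zero_or_eq x m with hm | hm <;> simp_all
  have hy_bdd : ∀ n, ‖firstOccurrences x n‖ ≤ max C 0 := fun n => by
    rcases firstOccurrences_eq_zero_or_eq x n with hn | hn <;> simp [hn, hC n]
  have hy_pos : ∀ n, 0 ≤ firstOccurrences x n := fun n => by
    rcases firstOccurrences_eq_zero_or_eq x n with hn | hn <;> simp [hn, hpos n]
  refine (hseq _ hy_pos hy_disj ⟨_, hy_bdd⟩).of_isClosed_subset isClosed_closure
    (closure_mono ?_)
  rintro _ ⟨T, hT, k, rfl⟩
  obtain ⟨n, hn⟩ := exists_firstOccurrences_eq x k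
  exact ⟨T, hT, n, by rw [hn]⟩

end NormedLattice

theorem relCompact_on_disjoint_bounded_iff_relCompact_on_disjoint_positive_seq_general
    {E : Type*} [NormedAddCommGroup E] [Lattice E] [HasSolidNorm E] [IsOrderedAddMonoid E] [NormedSpace ℝ E]
    {F : Type*} [AddCommGroup F] [Module ℝ F] [UniformSpace F] [IsUniformAddGroup F]
    [FirstCountableTopology F]
    (𝒯 : Set (E →ₗ[ℝ] F)) :
    (∀ D : Set E, (D.Pairwise fun x y => |x| ⊓ |y| = 0) →
        (∃ C : ℝ, ∀ x ∈ D, ‖x‖ ≤ C) →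
        IsCompact (closure {z : F | ∃ T ∈ 𝒯, ∃ x ∈ D, z = T x})) ↔
      (∀ x : ℕ → E, (∀ n, 0 ≤ x n) →
        (∀ n m, n ≠ m → |x n| ⊓ |x m| = 0) → (∃ C : ℝ, ∀ n, ‖x n‖ ≤ C) →
        IsCompact (closure {z : F | ∃ T ∈ 𝒯, ∃ n : ℕ, z = T (x n)})) := by
  refine ⟨fun h x _ hdisj ⟨C, hC⟩ => ?_, fun hseq D hD ⟨C, hC⟩ => ?_⟩
  · have hrange : (Set.range x).Pairwise fun a b => |a| ⊓ |b| = 0 := by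
      rintro _ ⟨n, rfl⟩ _ ⟨m, rfl⟩ hne
      exact hdisj n m (ne_of_apply_ne x hne)
    simpa [Set.exists_range_iff, eq_comm] using h _ hrange ⟨C, Set.forall_mem_range.2 hC⟩
  · have := IsUniformAddGroup.uniformity_countably_generated (α := F)
    refine isCompact_closure_of_forall_seq_subset_isCompact fun w hw => ?_
    choose T hT a ha hwa using hw
    have hparts (f : E → E) (hf_pos : ∀ b, 0 ≤ f b) (hf_abs : ∀ b, |f b| ≤ |b|) :=
      isCompact_closure_seq_of_disjoint_of_ne 𝒯 hseq (fun k => f (a k)) (fun k => hf_pos _)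
        (fun n m hne => abs_inf_abs_eq_zero_of_abs_le (hf_abs _) (hf_abs _)
          (hD (ha n) (ha m) (ne_of_apply_ne f hne)))
        C (fun k => (HasSolidNorm.solid (hf_abs _)).trans (hC _ (ha k)))
    refine ⟨_, (hparts _ posPart_nonneg abs_posPart_le_abs).add
      (hparts _ negPart_nonneg abs_negPart_le_abs).neg, fun k => ?_⟩
    rw [hwa, ← posPart_sub_negPart (a k), map_sub, sub_eq_add_neg]
    exact Set.add_mem_add (subset_closure ⟨T k, hT k, k, rfl⟩)
      (Set.neg_mem_neg.2 (subset_closure ⟨T k, hT k, k, rfl⟩))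

/-- For a set `𝒯` of topologically bounded linear maps from a real Banach
lattice `E` to a real Fréchet space `F`: `{T x : T ∈ 𝒯, x ∈ D}` is relatively compact
for every pairwise disjoint norm-bounded subset `D` of `E` iff `{T xₙ : T ∈ 𝒯, n ∈ ℕ}`
is relatively compact for every pairwise disjoint norm-bounded sequence `(xₙ)` of
positive elements of `E`. -/
theorem relCompact_on_disjoint_bounded_iff_relCompact_on_disjoint_positive_seq
    {E : Type*} [NormedAddCommGroup E] [Lattice E] [HasSolidNorm E] [IsOrderedAddMonoid E] [NormedSpace ℝ E] [CompleteSpace E]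
    {F : Type*} [AddCommGroup F] [Module ℝ F] [UniformSpace F] [IsUniformAddGroup F]
    [ContinuousSMul ℝ F] [LocallyConvexSpace ℝ F]
    [FirstCountableTopology F] [T2Space F] [CompleteSpace F]
    (𝒯 : Set (E →ₗ[ℝ] F))
    (hbdd : ∀ T ∈ 𝒯, Bornology.IsVonNBounded ℝ (T '' Metric.closedBall (0 : E) 1)) :
    (∀ D : Set E, (D.Pairwise fun x y => |x| ⊓ |y| = 0) →
        (∃ C : ℝ, ∀ x ∈ D, ‖x‖ ≤ C) →
        IsCompact (closure {z : F | ∃ T ∈ 𝒯, ∃ x ∈ D, z = T x})) ↔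
      (∀ x : ℕ → E, (∀ n, 0 ≤ x n) →
        (∀ n m, n ≠ m → |x n| ⊓ |x m| = 0) → (∃ C : ℝ, ∀ n, ‖x n‖ ≤ C) →
        IsCompact (closure {z : F | ∃ T ∈ 𝒯, ∃ n : ℕ, z = T (x n)})) :=
  relCompact_on_disjoint_bounded_iff_relCompact_on_disjoint_positive_seq_general 𝒯
end
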